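/- arXiv:2306.04583 — 11 statements merged into one kernel-verified Lean document; each statement's English description precedes it below -/
import Mathlib

section
/- Let X, S, A be finite nonempty sets with |X| ≥ 2 and ε ≥ 0 a real number. If f : X × S → A is an ε-almost collision-flat universal (ε-ACFU) hash function, then ε · |A| · (|X| − 1) ≥ |X| − |A|, i.e., ε ≥ (|X| − |A|)/(|A|(|X| − 1)). -/
/-!
For each seed `s`, the map `x ↦ f (x, s)` has at least `|X|² / |A|` colliding ordered pairs
(Cauchy–Schwarz over its fibres). Summed over `s` and regrouped by pairs `(x, x')`, the diagonal
contributes `|X| |S|`, and by (ACFU2) each of the `|X| (|X| - 1)` off-diagonal pairs collides on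
at most `ε |S|` seeds. Comparing the two counts gives the bound.
-/

open Finset

section Collisions

variable {ι α : Type*} [Fintype ι] [Fintype α] [DecidableEq α]

theorem card_collisions_eq_sum_sq_card_fiber (g : ι → α) :
    #{p : ι × ι | g p.1 = g p.2} = ∑ a, #{i | g i = a} ^ 2 := by
  rw [card_eq_sum_card_fiberwise (f := fun p : ι × ι => g p.1) (t := univ)
    fun _ _ => mem_coe.2 (mem_univ _)]
  refine sum_congr rfl fun a _ => ?_
  rw [sq, ← card_product]
  congr 1
  ext ⟨i, j⟩
  simp only [mem_filter, mem_univ, true_and, mem_product]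
  grind

theorem card_sq_le_card_mul_card_collisions (g : ι → α) :
    Fintype.card ι ^ 2 ≤ Fintype.card α * #{p : ι × ι | g p.1 = g p.2} := by
  have hfibers : Fintype.card ι = ∑ a, #{i | g i = a} :=
    card_eq_sum_card_fiberwise fun _ _ => mem_coe.2 (mem_univ _)
  rw [card_collisions_eq_sum_sq_card_fiber, hfibers]
  exact sq_sum_le_card_mul_sum_sq

theorem card_filter_eq_eq_sum_card_filter_and {σ : Type*} [Fintype σ] (g h : σ → α) :
    #{s | g s = h s} = ∑ a, #{s | g s = a ∧ h s = a} := by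
  rw [card_eq_sum_card_fiberwise (f := g) (t := univ) fun _ _ => mem_coe.2 (mem_univ _)]
  refine sum_congr rfl fun a _ => ?_
  congr 1
  ext s
  simp only [mem_filter, mem_univ, true_and]
  grind

end Collisions

theorem sum_sum_le_of_diag_eq_of_offDiag_le {ι : Type*} [Fintype ι] [DecidableEq ι]
    {M : ι → ι → ℝ} {d b : ℝ} (hdiag : ∀ i, M i i = d) (hoff : ∀ i j, i ≠ j → M i j ≤ b) :
    ∑ i, ∑ j, M i j ≤ Fintype.card ι * (d + (Fintype.card ι - 1) * b) := by
  have hrow : ∀ i, ∑ j, M i j ≤ d + (Fintype.card ι - 1) * b := by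
    intro i
    have hcard : ((#({i}ᶜ : Finset ι) : ℕ) : ℝ) = Fintype.card ι - 1 := by
      rw [card_compl, card_singleton, Nat.cast_sub (Fintype.card_pos_iff.2 ⟨i⟩), Nat.cast_one]
    rw [Fintype.sum_eq_add_sum_compl i, hdiag, ← hcard, ← nsmul_eq_mul]
    gcongr
    exact sum_le_card_nsmul _ _ _ fun j hj => hoff i j (Ne.symm (by simpa using hj))
  calc ∑ i, ∑ j, M i j ≤ ∑ _i : ι, (d + (Fintype.card ι - 1) * b) := sum_le_sum fun i _ => hrow i
    _ = _ := by rw [sum_const, card_univ, nsmul_eq_mul]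

theorem card_mul_card_sq_le_card_mul_sum_card_collisions {X S A : Type*} [Fintype X] [Fintype S]
    [Fintype A] [DecidableEq A] (f : X × S → A) :
    Fintype.card S * Fintype.card X ^ 2 ≤
      Fintype.card A * ∑ x, ∑ x', #{s | f (x, s) = f (x', s)} :=
  calc Fintype.card S * Fintype.card X ^ 2
      = ∑ _s : S, Fintype.card X ^ 2 := by rw [sum_const, card_univ, smul_eq_mul]
    _ ≤ ∑ s, Fintype.card A * #{p : X × X | f (p.1, s) = f (p.2, s)} :=
      sum_le_sum fun s _ => card_sq_le_card_mul_card_collisions fun x => f (x, s)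
    _ = Fintype.card A * ∑ p : X × X, #{s | f (p.1, s) = f (p.2, s)} := by
      rw [← mul_sum]
      exact congrArg _ (sum_card_bipartiteAbove_eq_sum_card_bipartiteBelow _)
    _ = Fintype.card A * ∑ x, ∑ x', #{s | f (x, s) = f (x', s)} := by
      rw [Fintype.sum_prod_type]

theorem acfu_epsilon_lower_bound_general {X S A : Type*} [Fintype X] [Fintype S] [Fintype A]
    [Nonempty X] [Nonempty S] [DecidableEq A]
    (ε : ℝ) (f : X × S → A)
    (hACFU2 : ∀ (x x' : X), x ≠ x' → ∀ (α : A),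
      (Fintype.card A : ℝ) *
          ((Finset.univ.filter fun s : S => f (x, s) = α ∧ f (x', s) = α).card : ℝ)
        ≤ ε * (Fintype.card S : ℝ)) :
    ε * (Fintype.card A : ℝ) * ((Fintype.card X : ℝ) - 1)
      ≥ (Fintype.card X : ℝ) - (Fintype.card A : ℝ) := by
  classical
  set nX : ℝ := (Fintype.card X : ℝ)
  set nS : ℝ := (Fintype.card S : ℝ)
  set nA : ℝ := (Fintype.card A : ℝ)
  set coll : X → X → ℕ := fun x x' => #{s | f (x, s) = f (x', s)}
  have hcoll_off : ∀ x x', x ≠ x' → nA * coll x x' ≤ nA * (ε * nS) := by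
    intro x x' hxx'
    calc nA * coll x x' = ∑ α, nA * #{s | f (x, s) = α ∧ f (x', s) = α} := by
          simp only [coll, card_filter_eq_eq_sum_card_filter_and, Nat.cast_sum, mul_sum]
      _ ≤ ∑ _α : A, ε * nS := sum_le_sum fun α _ => hACFU2 x x' hxx' α
      _ = nA * (ε * nS) := by rw [sum_const, card_univ, nsmul_eq_mul]
  have hbound := sum_sum_le_of_diag_eq_of_offDiag_le (M := fun x x' => nA * coll x x')
    (d := nA * nS) (fun x => by simp [coll, nS]) hcoll_off
  have hscaled : nX * nS * nX ≤ nX * nS * (nA + (nX - 1) * (ε * nA)) :=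
    calc nX * nS * nX = nS * nX ^ 2 := by ring
      _ ≤ ∑ x, ∑ x', nA * coll x x' := by
        simp only [nS, nX, nA, ← mul_sum]
        exact_mod_cast card_mul_card_sq_le_card_mul_sum_card_collisions f
      _ ≤ nX * (nA * nS + (nX - 1) * (nA * (ε * nS))) := hbound
      _ = nX * nS * (nA + (nX - 1) * (ε * nA)) := by ring
  have hdiv := le_of_mul_le_mul_left hscaled (by positivity)
  linarith

/-- For any ε-ACFU hash function, ε ≥ (|X| − |A|)/(|A|(|X| − 1)). -/
theorem acfu_epsilon_lower_bound {X S A : Type*} [Fintype X] [Fintype S] [Fintype A]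
    [Nonempty X] [Nonempty S] [Nonempty A] [DecidableEq A]
    (hX : 2 ≤ Fintype.card X)
    (ε : ℝ) (hε : 0 ≤ ε) (f : X × S → A)
    (hACFU1 : ∀ (x : X) (α : A),
      (Fintype.card A : ℝ) * ((Finset.univ.filter fun s : S => f (x, s) = α).card : ℝ)
        = (Fintype.card S : ℝ))
    (hACFU2 : ∀ (x x' : X), x ≠ x' → ∀ (α : A),
      (Fintype.card A : ℝ) *
          ((Finset.univ.filter fun s : S => f (x, s) = α ∧ f (x', s) = α).card : ℝ)
        ≤ ε * (Fintype.card S : ℝ)) :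
    ε * (Fintype.card A : ℝ) * ((Fintype.card X : ℝ) - 1)
      ≥ (Fintype.card X : ℝ) - (Fintype.card A : ℝ) :=
  acfu_epsilon_lower_bound_general ε f hACFU2
end

section
/- Let X, S, A be finite nonempty sets with 2 ≤ |A| < |X| and ε ≥ 0 a real number. If f : X × S → A is a nontrivial ε-almost collision-flat universal (ε-ACFU) hash function, then ε · |S| ≥ |A|. -/
/-! Fixing one seed `s₀`, the pigeonhole principle (`|A| < |X|`) yields distinct inputs colliding
at `s₀`, so one of the collision sets bounded in (ACFU2) is nonempty and
`|A| ≤ |A| · #{s | f (x, s) = f (x', s) = α} ≤ ε |S|`. -/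

open Finset

theorem exists_ne_collision_nonempty {X S A : Type*} [Fintype X] [Fintype A] [DecidableEq A]
    [Fintype S] [Nonempty S] (f : X × S → A) (hAX : Fintype.card A < Fintype.card X) :
    ∃ x x' : X, x ≠ x' ∧ ∃ α : A,
      (univ.filter fun s : S => f (x, s) = α ∧ f (x', s) = α).Nonempty := by
  obtain ⟨s₀⟩ := ‹Nonempty S›
  obtain ⟨x, x', hne, heq⟩ := Fintype.exists_ne_map_eq_of_card_lt (fun x : X => f (x, s₀)) hAX
  exact ⟨x, x', hne, f (x, s₀), s₀, by simp [heq]⟩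

theorem acfu_seed_size_lb_simple_general {X S A : Type*} [Fintype X] [Fintype S] [Fintype A]
    [Nonempty S] [DecidableEq A]
    (hAX : Fintype.card A < Fintype.card X)
    (ε : ℝ) (f : X × S → A)
    (hACFU2 : ∀ (x x' : X), x ≠ x' → ∀ (α : A),
      (Fintype.card A : ℝ) *
          ((Finset.univ.filter fun s : S => f (x, s) = α ∧ f (x', s) = α).card : ℝ)
        ≤ ε * (Fintype.card S : ℝ)) :
    ε * (Fintype.card S : ℝ) ≥ (Fintype.card A : ℝ) := by
  obtain ⟨x, x', hne, α, hcoll⟩ := exists_ne_collision_nonempty f hAX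
  have hcard : (1 : ℝ) ≤ (univ.filter fun s : S => f (x, s) = α ∧ f (x', s) = α).card := by
    exact_mod_cast hcoll.card_pos
  calc (Fintype.card A : ℝ) = Fintype.card A * 1 := (mul_one _).symm
    _ ≤ Fintype.card A * (univ.filter fun s : S => f (x, s) = α ∧ f (x', s) = α).card := by
      gcongr
    _ ≤ ε * Fintype.card S := hACFU2 x x' hne α

/-- Simple lower bound |S| ≥ |A|/ε for a nontrivial ε-ACFU hash
function, stated as ε·|S| ≥ |A|. -/
theorem acfu_seed_size_lb_simple {X S A : Type*} [Fintype X] [Fintype S] [Fintype A]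
    [Nonempty X] [Nonempty S] [Nonempty A] [DecidableEq A]
    (hA : 2 ≤ Fintype.card A) (hAX : Fintype.card A < Fintype.card X)
    (ε : ℝ) (hε : 0 ≤ ε) (f : X × S → A)
    (hACFU1 : ∀ (x : X) (α : A),
      (Fintype.card A : ℝ) * ((Finset.univ.filter fun s : S => f (x, s) = α).card : ℝ)
        = (Fintype.card S : ℝ))
    (hACFU2 : ∀ (x x' : X), x ≠ x' → ∀ (α : A),
      (Fintype.card A : ℝ) *
          ((Finset.univ.filter fun s : S => f (x, s) = α ∧ f (x', s) = α).card : ℝ)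
        ≤ ε * (Fintype.card S : ℝ)) :
    ε * (Fintype.card S : ℝ) ≥ (Fintype.card A : ℝ) :=
  acfu_seed_size_lb_simple_general hAX ε f hACFU2
end

section
/- Let X, S, A be finite nonempty sets and let f : X × S → A. Suppose there exist natural numbers k, λ, μ with 2 ≤ k < |S|, λ ≥ 1 and μ ≥ 1 such that: (i) for every x ∈ X and α ∈ A, |{s ∈ S : f(x,s) = α}| = k; (ii) for all distinct s, s' ∈ S and every α ∈ A, |{x ∈ X : f(x,s) = f(x,s') = α}| = λ; (iii) for all distinct x, x' ∈ X and every α ∈ A, |{s ∈ S : f(x,s) = f(x',s) = α}| ∈ {0, μ}; and (iv) both values 0 and μ are attained in (iii). Then f is a nontrivial ε-almost collision-flat universal (ε-ACFU) hash function with ε = μ/k, and equality holds in the seed bound: |S| = 1 + |X|(|A| − 1)² / (ε·|A|·(|X| − |A|) + |A|² − |X|). -/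
/-!
For a fixed symbol `α`, the sets `{s | f (x, s) = α}` are the blocks of a `2-(|S|, k, λ)` design
indexed by `X`, and for fixed `x` they partition `S`. Hence `|S| = |A| k`, every point lies in
`r = λ (|S| - 1) / (k - 1)` blocks of each symbol, `|X| = |A| r`, and `r ≥ 2`. Counting, for one
block `B`, the sums of `|B ∩ B'|` and of `|B ∩ B'|²` over all blocks `B'` of the same symbol, and
using that `|B ∩ B'| ∈ {0, μ}` for `B' ≠ B`, gives the quasi-symmetric identity
`(r - 1)(μ - 1) = (k - 1)(λ - 1)`. Together with `r (k - 1) = λ (|S| - 1)` this turns the seed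
bound into an identity.
-/

open Finset

theorem sum_sq_card_filter_eq_sum_sum_card_filter_and {X S : Type*} [Fintype X]
    (I : X → S → Prop) [∀ x s, Decidable (I x s)] (T : Finset S) :
    ∑ x, #{s ∈ T | I x s} ^ 2 = ∑ s ∈ T, ∑ t ∈ T, #{x | I x s ∧ I x t} := by
  simp only [card_filter, sq, sum_mul_sum, ite_zero_mul_ite_zero, mul_one]
  rw [sum_comm]
  exact sum_congr rfl fun s _ => sum_comm

theorem card_eq_card_mul_of_card_fiber_eq {S A : Type*} [Fintype S] [Fintype A] [DecidableEq A]
    (g : S → A) {k : ℕ} (hk : ∀ a, #{s | g s = a} = k) : Fintype.card S = Fintype.card A * k := by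
  rw [← card_univ, card_eq_sum_card_fiberwise (f := g) (t := univ) fun _ _ => mem_univ _]
  simp [hk, mul_comm]

section Design

variable {X S : Type*} [Fintype X] {I : X → S → Prop} [∀ x s, Decidable (I x s)] {k r lam : ℕ}

theorem sum_card_filter_and_eq (hpair : ∀ s t, s ≠ t → #{x | I x s ∧ I x t} = lam)
    {T : Finset S} {s : S} (hs : s ∈ T) :
    ∑ t ∈ T, #{x | I x s ∧ I x t} = #{x | I x s} + (#T - 1) * lam := by
  classical
  rw [← add_sum_erase T _ hs, sum_congr rfl fun t ht => hpair s t (ne_of_mem_erase ht).symm,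
    sum_const, smul_eq_mul, card_erase_of_mem hs]
  simp only [and_self]

variable [Fintype S]

theorem card_filter_mul_sub_one_eq (hk : ∀ x, #{s | I x s} = k)
    (hpair : ∀ s t, s ≠ t → #{x | I x s ∧ I x t} = lam) (s : S) :
    (#{x | I x s} : ℝ) * (k - 1) = (Fintype.card S - 1) * lam := by
  have hcount : #{x | I x s} * k = #{x | I x s} + (Fintype.card S - 1) * lam :=
    calc #{x | I x s} * k = ∑ x, #{t | I x s ∧ I x t} := by
          rw [card_filter, sum_mul]
          refine sum_congr rfl fun x _ => ?_
          by_cases hx : I x s <;> simp [hx, hk]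
      _ = ∑ t, #{x | I x s ∧ I x t} := by
          simp only [card_filter]
          exact sum_comm
      _ = #{x | I x s} + (Fintype.card S - 1) * lam := sum_card_filter_and_eq hpair (mem_univ s)
  have hS : 0 < Fintype.card S := Fintype.card_pos_iff.mpr ⟨s⟩
  have := congrArg (Nat.cast : ℕ → ℝ) hcount
  push_cast [Nat.cast_pred hS] at this
  linarith

theorem two_le_card_filter (hk0 : 0 < k) (hkS : k < Fintype.card S) (hlam : 1 ≤ lam)
    (hk : ∀ x, #{s | I x s} = k) (hpair : ∀ s t, s ≠ t → #{x | I x s ∧ I x t} = lam) (s : S) :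
    2 ≤ #{x | I x s} := by
  by_contra! hr
  have hrep := card_filter_mul_sub_one_eq hk hpair s
  have hr1 : (#{x | I x s} : ℝ) ≤ 1 := by exact_mod_cast Nat.lt_succ_iff.mp hr
  have hkS' : (k : ℝ) + 1 ≤ Fintype.card S := by exact_mod_cast hkS
  have hlam' : (1 : ℝ) ≤ lam := by exact_mod_cast hlam
  have hk1 : (1 : ℝ) ≤ k := by exact_mod_cast hk0
  nlinarith

theorem sum_card_filter_and_eq_mul (hr : ∀ s, #{x | I x s} = r) (x₀ : X) :
    ∑ x, #{s | I x₀ s ∧ I x s} = #{s | I x₀ s} * r := by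
  have := sum_card_bipartiteAbove_eq_sum_card_bipartiteBelow (s := univ) (t := {s | I x₀ s})
    (r := I)
  simp only [bipartiteAbove, bipartiteBelow, filter_filter] at this
  rw [this, sum_congr rfl fun s _ => hr s, sum_const, smul_eq_mul]

theorem sum_sq_card_filter_and_eq (hk : ∀ x, #{s | I x s} = k) (hr : ∀ s, #{x | I x s} = r)
    (hpair : ∀ s t, s ≠ t → #{x | I x s ∧ I x t} = lam) (x₀ : X) :
    ∑ x, #{s | I x₀ s ∧ I x s} ^ 2 = k * (r + (k - 1) * lam) := by
  simp only [← filter_filter]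
  rw [sum_sq_card_filter_eq_sum_sum_card_filter_and,
    sum_congr rfl fun s hs => sum_card_filter_and_eq hpair hs]
  simp [hk, hr]

theorem sub_one_mul_sub_one_eq_of_card_inter_eq_zero_or (hk0 : 0 < k)
    (hk : ∀ x, #{s | I x s} = k) (hr : ∀ s, #{x | I x s} = r)
    (hpair : ∀ s t, s ≠ t → #{x | I x s ∧ I x t} = lam) {μ : ℕ} (x₀ : X)
    (hinter : ∀ x, x ≠ x₀ → #{s | I x₀ s ∧ I x s} = 0 ∨ #{s | I x₀ s ∧ I x s} = μ) :
    ((r : ℝ) - 1) * (μ - 1) = (k - 1) * (lam - 1) := by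
  set n : X → ℝ := fun x => #{s | I x₀ s ∧ I x s}
  have hsum : ∑ x, n x = k * r := by
    simp only [n]
    exact_mod_cast (sum_card_filter_and_eq_mul hr x₀).trans (by rw [hk])
  have hsum_sq : ∑ x, n x ^ 2 = k * (r + (k - 1) * lam) := by
    simp only [n]
    rw [← Nat.cast_pred hk0]
    exact_mod_cast sum_sq_card_filter_and_eq hk hr hpair x₀
  -- only the block `x₀` itself, with `n x₀ = k`, contributes
  have hsum_excess : ∑ x, n x * (n x - μ) = k * (k - μ) := by
    rw [sum_eq_single_of_mem x₀ (mem_univ _) fun x _ hx => ?_]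
    · simp [n, hk]
    · rcases hinter x hx with h | h <;> simp [n, h]
  have hexpand : ∑ x, n x * (n x - μ) = ∑ x, n x ^ 2 - μ * ∑ x, n x := by
    simp only [mul_sub, sum_sub_distrib, mul_sum, sq, mul_comm]
  rw [hexpand, hsum_sq, hsum] at hsum_excess
  apply mul_left_cancel₀ (show (k : ℝ) ≠ 0 by positivity)
  linear_combination -hsum_excess

end Design

theorem seed_denominator_mul_eq {K : Type*} [Field K] {a k r lam μ : K} (hk : k ≠ 0)
    (hrep : r * (k - 1) = (a * k - 1) * lam) (hqs : (r - 1) * (μ - 1) = (k - 1) * (lam - 1)) :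
    (a * k - 1) * (μ / k * a * (a * r - a) + a ^ 2 - a * r) = a * r * (a - 1) ^ 2 := by
  field_simp
  linear_combination (a ^ 2 * (a * k - 1)) * hqs - (a ^ 2 * (k - 1)) * hrep

theorem seed_bound_eq {a k r lam μ : ℝ} (ha : 1 < a) (hr : 0 < r) (hk : k ≠ 0)
    (hrep : r * (k - 1) = (a * k - 1) * lam) (hqs : (r - 1) * (μ - 1) = (k - 1) * (lam - 1)) :
    a * k = 1 + a * r * (a - 1) ^ 2 / (μ / k * a * (a * r - a) + a ^ 2 - a * r) := by
  have hid := seed_denominator_mul_eq hk hrep hqs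
  have hpos : 0 < a * r * (a - 1) ^ 2 := by
    have : 0 < a - 1 := by linarith
    positivity
  have hD : μ / k * a * (a * r - a) + a ^ 2 - a * r ≠ 0 := by
    rintro hD
    rw [hD, mul_zero] at hid
    linarith
  rw [← hid, mul_div_cancel_right₀ _ hD]
  ring

theorem dual_qs_mosaic_gives_seed_optimal_acfu_general {X S A : Type*}
    [Fintype X] [Fintype S] [Fintype A]
    [Nonempty X] [DecidableEq A]
    (f : X × S → A) (k lam μ : ℕ)
    (hk2 : 2 ≤ k) (hkS : k < Fintype.card S) (hlam : 1 ≤ lam)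
    (hblocksize : ∀ (x : X) (α : A),
      (Finset.univ.filter fun s : S => f (x, s) = α).card = k)
    (hlambda : ∀ (s s' : S), s ≠ s' → ∀ (α : A),
      (Finset.univ.filter fun x : X => f (x, s) = α ∧ f (x, s') = α).card = lam)
    (hinter : ∀ (x x' : X), x ≠ x' → ∀ (α : A),
      (Finset.univ.filter fun s : S => f (x, s) = α ∧ f (x', s) = α).card = 0 ∨
      (Finset.univ.filter fun s : S => f (x, s) = α ∧ f (x', s) = α).card = μ) :
    (2 ≤ Fintype.card A ∧ Fintype.card A < Fintype.card X) ∧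
    (∀ (x : X) (α : A),
      (Fintype.card A : ℝ) * ((Finset.univ.filter fun s : S => f (x, s) = α).card : ℝ)
        = (Fintype.card S : ℝ)) ∧
    (∀ (x x' : X), x ≠ x' → ∀ (α : A),
      (Fintype.card A : ℝ) *
          ((Finset.univ.filter fun s : S => f (x, s) = α ∧ f (x', s) = α).card : ℝ)
        ≤ ((μ : ℝ) / (k : ℝ)) * (Fintype.card S : ℝ)) ∧
    (Fintype.card S : ℝ)
      = 1 + (Fintype.card X : ℝ) * ((Fintype.card A : ℝ) - 1) ^ 2 /
          (((μ : ℝ) / (k : ℝ)) * (Fintype.card A : ℝ) *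
              ((Fintype.card X : ℝ) - (Fintype.card A : ℝ))
            + (Fintype.card A : ℝ) ^ 2 - (Fintype.card X : ℝ)) := by
  obtain ⟨x₀⟩ := ‹Nonempty X›
  obtain ⟨s₀⟩ : Nonempty S := Fintype.card_pos_iff.mp (by omega)
  set α₀ := f (x₀, s₀)
  have hS := card_eq_card_mul_of_card_fiber_eq (fun s => f (x₀, s)) (hblocksize x₀)
  have hA : 2 ≤ Fintype.card A := by nlinarith
  have hpair (α : A) (s s' : S) (h : s ≠ s') := hlambda s s' h α
  have hrep (s : S) (α : A) := card_filter_mul_sub_one_eq (hblocksize · α) (hpair α) s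
  set r := #{x | f (x, s₀) = α₀}
  have hr (s : S) (α : A) : #{x | f (x, s) = α} = r := by
    have hk1 : (k : ℝ) - 1 ≠ 0 := sub_ne_zero.mpr (by exact_mod_cast (by omega : k ≠ 1))
    exact_mod_cast mul_right_cancel₀ hk1 ((hrep s α).trans (hrep s₀ α₀).symm)
  have hX := card_eq_card_mul_of_card_fiber_eq (fun x => f (x, s₀)) (hr s₀)
  have hr2 := two_le_card_filter (by omega) hkS hlam (hblocksize · α₀) (hpair α₀) s₀
  have hqs := sub_one_mul_sub_one_eq_of_card_inter_eq_zero_or (by omega) (hblocksize · α₀)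
    (hr · α₀) (hpair α₀) x₀ (fun x hx => hinter x₀ x hx.symm α₀)
  refine ⟨⟨hA, by nlinarith⟩, fun x α => ?_, fun x x' hxx' α => ?_, ?_⟩
  · rw [hblocksize, hS]
    push_cast
    ring
  · rcases hinter x x' hxx' α with h | h <;> rw [h, hS]
    · simp only [CharP.cast_eq_zero, mul_zero]
      positivity
    · apply le_of_eq
      push_cast
      field_simp
  · have hrep₀ := hrep s₀ α₀
    rw [hS] at hrep₀ ⊢
    rw [hX]
    push_cast at hrep₀ ⊢
    exact seed_bound_eq (by exact_mod_cast hA) (by positivity) (by positivity) hrep₀ hqs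

/-- If the dual of the mosaic of f is a mosaic of nontrivial
quasi-symmetric BIBDs with intersection numbers 0 and μ, then f is a nontrivial
(μ/k)-ACFU hash function attaining equality in the variance seed bound. -/
theorem dual_qs_mosaic_gives_seed_optimal_acfu {X S A : Type*}
    [Fintype X] [Fintype S] [Fintype A]
    [Nonempty X] [Nonempty S] [Nonempty A] [DecidableEq A]
    (f : X × S → A) (k lam μ : ℕ)
    (hk2 : 2 ≤ k) (hkS : k < Fintype.card S) (hlam : 1 ≤ lam) (hμ : 1 ≤ μ)
    (hblocksize : ∀ (x : X) (α : A),
      (Finset.univ.filter fun s : S => f (x, s) = α).card = k)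
    (hlambda : ∀ (s s' : S), s ≠ s' → ∀ (α : A),
      (Finset.univ.filter fun x : X => f (x, s) = α ∧ f (x, s') = α).card = lam)
    (hinter : ∀ (x x' : X), x ≠ x' → ∀ (α : A),
      (Finset.univ.filter fun s : S => f (x, s) = α ∧ f (x', s) = α).card = 0 ∨
      (Finset.univ.filter fun s : S => f (x, s) = α ∧ f (x', s) = α).card = μ)
    (hzero : ∃ (x x' : X) (α : A), x ≠ x' ∧
      (Finset.univ.filter fun s : S => f (x, s) = α ∧ f (x', s) = α).card = 0)
    (hmu : ∃ (x x' : X) (α : A), x ≠ x' ∧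
      (Finset.univ.filter fun s : S => f (x, s) = α ∧ f (x', s) = α).card = μ) :
    (2 ≤ Fintype.card A ∧ Fintype.card A < Fintype.card X) ∧
    (∀ (x : X) (α : A),
      (Fintype.card A : ℝ) * ((Finset.univ.filter fun s : S => f (x, s) = α).card : ℝ)
        = (Fintype.card S : ℝ)) ∧
    (∀ (x x' : X), x ≠ x' → ∀ (α : A),
      (Fintype.card A : ℝ) *
          ((Finset.univ.filter fun s : S => f (x, s) = α ∧ f (x', s) = α).card : ℝ)
        ≤ ((μ : ℝ) / (k : ℝ)) * (Fintype.card S : ℝ)) ∧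
    (Fintype.card S : ℝ)
      = 1 + (Fintype.card X : ℝ) * ((Fintype.card A : ℝ) - 1) ^ 2 /
          (((μ : ℝ) / (k : ℝ)) * (Fintype.card A : ℝ) *
              ((Fintype.card X : ℝ) - (Fintype.card A : ℝ))
            + (Fintype.card A : ℝ) ^ 2 - (Fintype.card X : ℝ)) :=
  dual_qs_mosaic_gives_seed_optimal_acfu_general f k lam μ hk2 hkS hlam hblocksize hlambda hinter
end

section
/- Let x, a be natural numbers with x > a > 1. Then (x − a)/(a(x − 1)) ≤ (x − a²)/(x − a) if and only if x ≥ (a/2)·(a + √((a + 3)(a − 1)) + 1), where all quantities are interpreted as real numbers. -/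
/-!
Clearing the (positive) denominators, the inequality becomes `(a - 1) q(x) ≥ 0` for the monic
quadratic `q(x) = x² - a(a + 1)x + a²`, whose roots are `a/2 (a + 1 ± √((a + 3)(a - 1)))`.
Since `√((a + 3)(a - 1)) ≥ a - 1`, the smaller root is at most `a < x`, so `q(x) ≥ 0` exactly when
`x` is at least the larger root.
-/

lemma sub_div_mul_sub_one_le_iff {A X : ℝ} (hA : 1 < A) (hAX : A < X) :
    (X - A) / (A * (X - 1)) ≤ (X - A ^ 2) / (X - A) ↔ 0 ≤ X ^ 2 - A * (A + 1) * X + A ^ 2 := by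
  have hden₁ : 0 < A * (X - 1) := mul_pos (by linarith) (by linarith)
  have hden₂ : 0 < X - A := sub_pos.mpr hAX
  have key : (X - A ^ 2) * (A * (X - 1)) - (X - A) * (X - A)
      = (A - 1) * (X ^ 2 - A * (A + 1) * X + A ^ 2) := by ring
  rw [div_le_div_iff₀ hden₁ hden₂, ← sub_nonneg, key,
    mul_nonneg_iff_of_pos_left (sub_pos.mpr hA)]

lemma quadratic_nonneg_iff_of_lt_root {b c s X : ℝ} (hs : s ^ 2 = b ^ 2 - 4 * c)
    (hX : (b - s) / 2 < X) : 0 ≤ X ^ 2 - b * X + c ↔ (b + s) / 2 ≤ X := by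
  have factor : X ^ 2 - b * X + c = (X - (b - s) / 2) * (X - (b + s) / 2) := by
    linear_combination (1 / 4 : ℝ) * hs
  rw [factor, mul_nonneg_iff_of_pos_left (sub_pos.mpr hX), sub_nonneg]

lemma sub_one_le_sqrt_add_three_mul_sub_one {A : ℝ} (hA : 1 ≤ A) :
    A - 1 ≤ √((A + 3) * (A - 1)) :=
  Real.le_sqrt_of_sq_le (by nlinarith)

/-- The interval of feasible ε to which the variance bound applies
is nonempty iff x ≥ (a/2)(a + √((a+3)(a−1)) + 1). -/
theorem acfu_lb_comparison_nonempty (x a : ℕ) (hax : a < x) (ha : 1 < a) :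
    ((x : ℝ) - (a : ℝ)) / ((a : ℝ) * ((x : ℝ) - 1))
        ≤ ((x : ℝ) - (a : ℝ) ^ 2) / ((x : ℝ) - (a : ℝ))
    ↔ (x : ℝ) ≥ (a : ℝ) / 2 *
        ((a : ℝ) + Real.sqrt (((a : ℝ) + 3) * ((a : ℝ) - 1)) + 1) := by
  have hA : (1 : ℝ) < a := by exact_mod_cast ha
  have hAX : (a : ℝ) < x := by exact_mod_cast hax
  set r := √(((a : ℝ) + 3) * ((a : ℝ) - 1))
  have hr : r ^ 2 = ((a : ℝ) + 3) * ((a : ℝ) - 1) := Real.sq_sqrt (by nlinarith)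
  have hr_ge : (a : ℝ) - 1 ≤ r := sub_one_le_sqrt_add_three_mul_sub_one hA.le
  have below_small_root : (a * (a + 1) - a * r) / 2 < (x : ℝ) := by nlinarith
  rw [sub_div_mul_sub_one_le_iff hA hAX,
    quadratic_nonneg_iff_of_lt_root (by linear_combination (a : ℝ) ^ 2 * hr) below_small_root,
    ge_iff_le, show ((a : ℝ) * (a + 1) + a * r) / 2 = a / 2 * (a + r + 1) by ring]
end

section
/- Let X, S, A be finite nonempty sets with 2 ≤ |A| < |X|, let ε = (|X| − |A|)/(|A|(|X| − 1)), and let f : X × S → A be an ε-almost collision-flat universal (ε-ACFU) hash function (i.e., an OCFU hash function). Then |A| divides |X|, and: (i) for every s ∈ S and α ∈ A, |A| · |{x ∈ X : f(x,s) = α}| = |X|; and (ii) for all distinct x, x' ∈ X and every α ∈ A, the real number |{s ∈ S : f(x,s) = f(x',s) = α}| equals exactly ε·|S|/|A|. -/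
/-!
Fix `α` and regard `B_s = {x | f (x, s) = α}` as blocks on the point set `X`. By (ACFU1) each
point lies in `r = |S|/|A|` blocks, and by (ACFU2) each pair of distinct points in at most
`λ = ε|S|/|A|` blocks. Counting incident triples gives `∑ₛ |B_s|² ≤ |X| r + |X|(|X| - 1) λ`,
and for the optimal `ε` the right-hand side is exactly `|S| m²` with `m = |X|/|A|`, while
`∑ₛ |B_s| = |S| m`. So the variance of the block sizes vanishes, every block has size `m`,
and the pair bound is attained by every pair.
-/

open Finset

theorem eq_of_sum_eq_of_sum_sq_le {ι : Type*} {s : Finset ι} {N : ι → ℝ} {m : ℝ}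
    (hsum : ∑ i ∈ s, N i = #s * m) (hsq : ∑ i ∈ s, N i ^ 2 ≤ #s * m ^ 2) :
    ∀ i ∈ s, N i = m := by
  have hvar : ∑ i ∈ s, (N i - m) ^ 2 = ∑ i ∈ s, N i ^ 2 - #s * m ^ 2 := by
    simp only [sub_sq, sum_add_distrib, sum_sub_distrib, ← sum_mul, ← mul_sum, hsum, sum_const,
      nsmul_eq_mul]
    ring
  have hzero := (sum_eq_zero_iff_of_nonneg fun i _ => sq_nonneg (N i - m)).1
    (le_antisymm (by linarith) (sum_nonneg fun i _ => sq_nonneg _))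
  intro i hi
  exact sub_eq_zero.1 (pow_eq_zero_iff two_ne_zero |>.1 (hzero i hi))

section Incidence

variable {X S : Type*} [Fintype X] [Fintype S] (R : X → S → Prop) [DecidableRel R]

theorem sum_sq_card_filter_eq_sum_card_filter_and :
    ∑ s, #{x | R x s} ^ 2 = ∑ p : X × X, #{s | R p.1 s ∧ R p.2 s} := by
  have hsq (s : S) : #{x | R x s} ^ 2 = #{p : X × X | R p.1 s ∧ R p.2 s} := by
    rw [sq, ← card_product, ← filter_product, univ_product_univ]
  simp_rw [hsq]
  exact (sum_card_bipartiteAbove_eq_sum_card_bipartiteBelow _).symm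

theorem card_filter_eq_and_card_filter_and_eq_of_le (r lam m : ℝ)
    (hr : ∀ x, (#{s | R x s} : ℝ) = r)
    (hlam : ∀ x x', x ≠ x' → (#{s | R x s ∧ R x' s} : ℝ) ≤ lam)
    (hm : Fintype.card X * r = Fintype.card S * m)
    (hopt : Fintype.card X * r + Fintype.card X * (Fintype.card X - 1) * lam
      = Fintype.card S * m ^ 2) :
    (∀ s, (#{x | R x s} : ℝ) = m) ∧ ∀ x x', x ≠ x' → (#{s | R x s ∧ R x' s} : ℝ) = lam := by
  set C : X × X → ℝ := fun p => #{s | R p.1 s ∧ R p.2 s}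
  set D : Finset (X × X) := univ.offDiag with hD
  have hsum : ∑ s, (#{x | R x s} : ℝ) = Fintype.card S * m := by
    have hcount : ∑ s, #{x | R x s} = ∑ x, #{s | R x s} :=
      (sum_card_bipartiteAbove_eq_sum_card_bipartiteBelow R).symm
    rw [← hm, ← Nat.cast_sum, hcount, Nat.cast_sum]
    simp [hr]
  have hsq : ∑ s, (#{x | R x s} : ℝ) ^ 2 = Fintype.card X * r + ∑ p ∈ D, C p := by
    classical
    have hdiag : ∑ p ∈ univ.diag, C p = Fintype.card X * r := by simp [C, hr]
    rw [← hdiag, hD, ← sum_union (disjoint_diag_offDiag _), diag_union_offDiag, univ_product_univ]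
    simp only [C]
    exact_mod_cast sum_sq_card_filter_eq_sum_card_filter_and R
  have hoff_le : ∀ p ∈ D, C p ≤ lam := fun p hp =>
    hlam p.1 p.2 (mem_offDiag.1 hp).2.2
  have hoff_const : ∑ _p ∈ D, lam = Fintype.card X * (Fintype.card X - 1) * lam := by
    rw [sum_const, nsmul_eq_mul, hD, offDiag_card, card_univ,
      Nat.cast_sub (Nat.le_mul_self _)]
    push_cast
    ring
  have hsq_le : ∑ s, (#{x | R x s} : ℝ) ^ 2 ≤ #(univ : Finset S) * m ^ 2 := by
    rw [card_univ, hsq, ← hopt, ← hoff_const]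
    linarith [sum_le_sum hoff_le]
  have hN (s : S) : (#{x | R x s} : ℝ) = m :=
    eq_of_sum_eq_of_sum_sq_le (by rwa [card_univ]) hsq_le s (mem_univ s)
  refine ⟨hN, fun x x' hxx' => ?_⟩
  have hoff_eq : ∑ p ∈ D, C p = ∑ _p ∈ D, lam := by
    simp only [hN, sum_const, card_univ, nsmul_eq_mul] at hsq
    linarith
  exact (sum_eq_sum_iff_of_le hoff_le).1 hoff_eq (x, x') (by simpa [hD] using hxx')

end Incidence

theorem ocfu_mosaic_of_bibds_general {X S A : Type*} [Fintype X] [Fintype S] [Fintype A]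
    [Nonempty S] [Nonempty A] [DecidableEq A]
    (hAX : Fintype.card A < Fintype.card X)
    (ε : ℝ)
    (hεopt : ε = ((Fintype.card X : ℝ) - (Fintype.card A : ℝ)) /
      ((Fintype.card A : ℝ) * ((Fintype.card X : ℝ) - 1)))
    (f : X × S → A)
    (hACFU1 : ∀ (x : X) (α : A),
      (Fintype.card A : ℝ) * ((Finset.univ.filter fun s : S => f (x, s) = α).card : ℝ)
        = (Fintype.card S : ℝ))
    (hACFU2 : ∀ (x x' : X), x ≠ x' → ∀ (α : A),
      (Fintype.card A : ℝ) *
          ((Finset.univ.filter fun s : S => f (x, s) = α ∧ f (x', s) = α).card : ℝ)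
        ≤ ε * (Fintype.card S : ℝ)) :
    Fintype.card A ∣ Fintype.card X ∧
    (∀ (s : S) (α : A),
      (Fintype.card A : ℝ) * ((Finset.univ.filter fun x : X => f (x, s) = α).card : ℝ)
        = (Fintype.card X : ℝ)) ∧
    (∀ (x x' : X), x ≠ x' → ∀ (α : A),
      ((Finset.univ.filter fun s : S => f (x, s) = α ∧ f (x', s) = α).card : ℝ)
        = ε * (Fintype.card S : ℝ) / (Fintype.card A : ℝ)) := by
  have hA : (0 : ℝ) < Fintype.card A := by exact_mod_cast Fintype.card_pos
  have hX : (Fintype.card A : ℝ) < Fintype.card X := by exact_mod_cast hAX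
  have hX1 : (Fintype.card X : ℝ) - 1 ≠ 0 := by
    have : (1 : ℝ) ≤ Fintype.card A := by exact_mod_cast Fintype.card_pos
    linarith
  have key (α : A) := card_filter_eq_and_card_filter_and_eq_of_le (fun x s => f (x, s) = α)
    (Fintype.card S / Fintype.card A) (ε * Fintype.card S / Fintype.card A)
    (Fintype.card X / Fintype.card A)
    (fun x => by rw [eq_div_iff hA.ne', mul_comm]; exact hACFU1 x α)
    (fun x x' hxx' => by rw [le_div_iff₀ hA, mul_comm]; exact hACFU2 x x' hxx' α)
    (by ring) (by rw [hεopt]; field_simp; ring)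
  have hblock (s : S) (α : A) :
      (Fintype.card A : ℝ) * #{x | f (x, s) = α} = Fintype.card X := by
    rw [(key α).1 s]
    field_simp
  refine ⟨?_, hblock, fun x x' hxx' α => (key α).2 x x' hxx'⟩
  obtain ⟨s₀⟩ := ‹Nonempty S›
  obtain ⟨α₀⟩ := ‹Nonempty A›
  exact ⟨_, by exact_mod_cast (hblock s₀ α₀).symm⟩

/-- An OCFU hash function (ε optimal) has as mosaic a mosaic of
BIBDs: blocks have constant size |X|/|A| and any two distinct points lie in
exactly ε|S|/|A| common blocks of each member. -/
theorem ocfu_mosaic_of_bibds {X S A : Type*} [Fintype X] [Fintype S] [Fintype A]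
    [Nonempty X] [Nonempty S] [Nonempty A] [DecidableEq A]
    (hA : 2 ≤ Fintype.card A) (hAX : Fintype.card A < Fintype.card X)
    (ε : ℝ)
    (hεopt : ε = ((Fintype.card X : ℝ) - (Fintype.card A : ℝ)) /
      ((Fintype.card A : ℝ) * ((Fintype.card X : ℝ) - 1)))
    (f : X × S → A)
    (hACFU1 : ∀ (x : X) (α : A),
      (Fintype.card A : ℝ) * ((Finset.univ.filter fun s : S => f (x, s) = α).card : ℝ)
        = (Fintype.card S : ℝ))
    (hACFU2 : ∀ (x x' : X), x ≠ x' → ∀ (α : A),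
      (Fintype.card A : ℝ) *
          ((Finset.univ.filter fun s : S => f (x, s) = α ∧ f (x', s) = α).card : ℝ)
        ≤ ε * (Fintype.card S : ℝ)) :
    Fintype.card A ∣ Fintype.card X ∧
    (∀ (s : S) (α : A),
      (Fintype.card A : ℝ) * ((Finset.univ.filter fun x : X => f (x, s) = α).card : ℝ)
        = (Fintype.card X : ℝ)) ∧
    (∀ (x x' : X), x ≠ x' → ∀ (α : A),
      ((Finset.univ.filter fun s : S => f (x, s) = α ∧ f (x', s) = α).card : ℝ)
        = ε * (Fintype.card S : ℝ) / (Fintype.card A : ℝ)) :=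
  ocfu_mosaic_of_bibds_general hAX ε hεopt f hACFU1 hACFU2
end

section
/- Let X, S, A be finite nonempty sets with 2 ≤ |A| < |X|, let ε = (|X| − |A|)/(|A|(|X| − 1)), and let f : X × S → A be an ε-almost collision-flat universal (ε-ACFU) hash function (i.e., a nontrivial OCFU hash function). Then |S| · (|A| − 1) ≥ |A| · (|X| − 1). -/
/-!
Double counting the triples `(s, x, x')` with `f (x, s) = f (x', s)`, together with Cauchy–Schwarz
on the fibre sizes of each `f (·, s)`, shows that the average of `|A| · C(x, x', α)` over `x ≠ x'`
is at least the optimal `ε · |S|`, where `C(x, x', α)` counts the seeds sending both `x` and `x'`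
to `α`. Hence some collision count attains the ACFU2 bound: `|A|² (|X| - 1) C = |S| (|X| - |A|)`.
By ACFU1 `|S| = |A| F` for an integer `F ≥ 1`, so `|X| - 1` divides
`F (|X| - |A|) = F (|X| - 1) - F (|A| - 1)`, and therefore `|X| - 1 ≤ F (|A| - 1)`.
-/

open Finset

theorem Fintype.sum_sum_eq_sum_add_sum_offDiag {X M : Type*} [Fintype X] [DecidableEq X]
    [AddCommMonoid M] (g : X → X → M) :
    ∑ x, ∑ x', g x x' = ∑ x, g x x + ∑ p ∈ univ.offDiag, g p.1 p.2 := by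
  rw [← sum_diag (s := univ) (f := fun p => g p.1 p.2), ← sum_union (disjoint_diag_offDiag _),
    diag_union_offDiag, univ_product_univ, Fintype.sum_prod_type]

namespace UniversalHash

variable {X S A : Type*} [DecidableEq A]

def fiberCard [Fintype X] (f : X × S → A) (s : S) (α : A) : ℕ := #{x | f (x, s) = α}

def collisionCard [Fintype S] (f : X × S → A) (x x' : X) (α : A) : ℕ :=
  #{s | f (x, s) = α ∧ f (x', s) = α}

theorem sum_fiberCard [Fintype X] [Fintype A] (f : X × S → A) (s : S) :
    ∑ α, fiberCard f s α = Fintype.card X :=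
  (card_eq_sum_card_fiberwise fun x _ => mem_univ (f (x, s))).symm

theorem card_sq_le_card_mul_sum_fiberCard_sq [Fintype X] [Fintype A] (f : X × S → A) (s : S) :
    Fintype.card X ^ 2 ≤ Fintype.card A * ∑ α, fiberCard f s α ^ 2 := by
  simpa only [sum_fiberCard, card_univ, Nat.cast_id] using
    sq_sum_le_card_mul_sum_sq (s := univ) (f := fiberCard f s)

theorem sum_collisionCard_self [Fintype S] [Fintype A] (f : X × S → A) (x : X) :
    ∑ α, collisionCard f x x α = Fintype.card S := by
  rw [← card_univ, card_eq_sum_card_fiberwise fun s _ => mem_univ (f (x, s))]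
  simp only [collisionCard, and_self]

theorem sum_fiberCard_sq [Fintype X] [Fintype S] (f : X × S → A) (α : A) :
    ∑ s, fiberCard f s α ^ 2 = ∑ x, ∑ x', collisionCard f x x' α := by
  simp only [fiberCard, collisionCard, sq, card_filter, sum_mul_sum, ite_zero_mul_ite_zero,
    mul_one]
  rw [sum_comm]
  exact sum_congr rfl fun _ _ => sum_comm

variable [Fintype X] [Fintype S] [Fintype A]

theorem sum_sum_fiberCard_sq [DecidableEq X] (f : X × S → A) :
    ∑ α, ∑ s, fiberCard f s α ^ 2 =
      Fintype.card X * Fintype.card S + ∑ α, ∑ p ∈ univ.offDiag, collisionCard f p.1 p.2 α := by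
  simp only [sum_fiberCard_sq, Fintype.sum_sum_eq_sum_add_sum_offDiag, sum_add_distrib]
  rw [sum_comm, sum_congr rfl fun x _ => sum_collisionCard_self f x, sum_const, card_univ,
    smul_eq_mul]

theorem card_mul_card_mul_sub_le_sum_collisionCard [DecidableEq X] (f : X × S → A) :
    (Fintype.card X * Fintype.card S * (Fintype.card X - Fintype.card A) : ℤ) ≤
      Fintype.card A * ∑ α, ∑ p ∈ univ.offDiag, (collisionCard f p.1 p.2 α : ℤ) := by
  have hcs : Fintype.card X ^ 2 * Fintype.card S ≤
      Fintype.card A * ∑ α, ∑ s, fiberCard f s α ^ 2 := by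
    rw [sum_comm, mul_sum]
    calc Fintype.card X ^ 2 * Fintype.card S = ∑ _s : S, Fintype.card X ^ 2 := by
          rw [sum_const, card_univ, smul_eq_mul, mul_comm]
      _ ≤ _ := sum_le_sum fun s _ => card_sq_le_card_mul_sum_fiberCard_sq f s
  rw [sum_sum_fiberCard_sq] at hcs
  zify at hcs
  linarith

theorem exists_collisionCard_ge [Nonempty A] (f : X × S → A) (hX : 1 < Fintype.card X) :
    ∃ x x', x ≠ x' ∧ ∃ α, (Fintype.card S * (Fintype.card X - Fintype.card A) : ℤ) ≤
      Fintype.card A * Fintype.card A * (Fintype.card X - 1) * collisionCard f x x' α := by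
  classical
  obtain ⟨x₀, x₁, hx⟩ := Fintype.exists_pair_of_one_lt_card hX
  obtain ⟨α₀⟩ := ‹Nonempty A›
  have hne : (univ ×ˢ (univ : Finset X).offDiag).Nonempty :=
    ⟨(α₀, x₀, x₁), mem_product.2 ⟨mem_univ _, mem_offDiag.2 ⟨mem_univ _, mem_univ _, hx⟩⟩⟩
  obtain ⟨⟨α, x, x'⟩, hmem, hle⟩ := exists_le_of_sum_le hne
    (f := fun _ => (Fintype.card S * (Fintype.card X - Fintype.card A) : ℤ))
    (g := fun q => Fintype.card A * Fintype.card A * (Fintype.card X - 1) *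
      (collisionCard f q.2.1 q.2.2 q.1 : ℤ)) (by
      rw [sum_const, ← mul_sum, card_product, offDiag_card, card_univ, card_univ, sum_product,
        nsmul_eq_mul]
      push_cast [Nat.cast_sub (Nat.le_mul_self _)]
      have hX' : (0 : ℤ) ≤ Fintype.card A * (Fintype.card X - 1) :=
        mul_nonneg (Nat.cast_nonneg _) (by linarith [(Nat.one_le_cast (α := ℤ)).2 hX.le])
      linarith [mul_le_mul_of_nonneg_left (card_mul_card_mul_sub_le_sum_collisionCard f) hX'])
  exact ⟨x, x', (mem_offDiag.1 (mem_product.1 hmem).2).2.2, α, hle⟩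

end UniversalHash

theorem Int.sub_one_le_mul_sub_one_of_dvd {n a F : ℤ} (ha : 1 < a) (hF : 0 < F)
    (h : n - 1 ∣ F * (n - a)) : n - 1 ≤ F * (a - 1) := by
  refine Int.le_of_dvd (mul_pos hF (by omega)) ?_
  have := dvd_sub (dvd_mul_left (n - 1) F) h
  rwa [show F * (n - 1) - F * (n - a) = F * (a - 1) by ring] at this

theorem Int.mul_sub_one_le_of_dvd_of_eq {n a m c : ℤ} (ha : 1 < a) (hm : 0 < m) (hdvd : a ∣ m)
    (h : a * a * (n - 1) * c = m * (n - a)) : a * (n - 1) ≤ m * (a - 1) := by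
  obtain ⟨F, rfl⟩ := hdvd
  have hF : 0 < F := pos_of_mul_pos_right hm (by omega)
  have hFdvd : n - 1 ∣ F * (n - a) :=
    ⟨a * c, mul_left_cancel₀ (a := a) (by omega) (by linear_combination -h)⟩
  rw [mul_assoc]
  exact mul_le_mul_of_nonneg_left (sub_one_le_mul_sub_one_of_dvd ha hF hFdvd) (by omega)

open UniversalHash in
theorem ocfu_seed_size_lb_general {X S A : Type*} [Fintype X] [Fintype S] [Fintype A]
    [Nonempty S] [DecidableEq A]
    (hA : 2 ≤ Fintype.card A) (hAX : Fintype.card A < Fintype.card X)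
    (ε : ℝ)
    (hεopt : ε = ((Fintype.card X : ℝ) - (Fintype.card A : ℝ)) /
      ((Fintype.card A : ℝ) * ((Fintype.card X : ℝ) - 1)))
    (f : X × S → A)
    (hACFU1 : ∀ (x : X) (α : A),
      (Fintype.card A : ℝ) * ((Finset.univ.filter fun s : S => f (x, s) = α).card : ℝ)
        = (Fintype.card S : ℝ))
    (hACFU2 : ∀ (x x' : X), x ≠ x' → ∀ (α : A),
      (Fintype.card A : ℝ) *
          ((Finset.univ.filter fun s : S => f (x, s) = α ∧ f (x', s) = α).card : ℝ)
        ≤ ε * (Fintype.card S : ℝ)) :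
    (Fintype.card S : ℝ) * ((Fintype.card A : ℝ) - 1)
      ≥ (Fintype.card A : ℝ) * ((Fintype.card X : ℝ) - 1) := by
  have : Nonempty A := Fintype.card_pos_iff.mp (by omega)
  obtain ⟨x, x', hxx', α, hge⟩ := exists_collisionCard_ge f (by omega)
  set n := Fintype.card X
  set m := Fintype.card S
  set a := Fintype.card A
  have hle : (a * a * (n - 1) * collisionCard f x x' α : ℤ) ≤ m * (n - a) := by
    have hn : (1 : ℝ) < n := by exact_mod_cast (by omega : 1 < n)
    have ha : (0 : ℝ) < a := by exact_mod_cast (by omega : 0 < a)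
    have h := hACFU2 x x' hxx' α
    rw [hεopt, div_mul_eq_mul_div, le_div_iff₀ (mul_pos ha (by linarith))] at h
    exact_mod_cast (show (a * a * (n - 1) * collisionCard f x x' α : ℝ) ≤ m * (n - a) by
      rw [collisionCard]; linarith)
  have hdvd : (a : ℤ) ∣ m := ⟨#{s | f (x, s) = α}, by exact_mod_cast (hACFU1 x α).symm⟩
  exact_mod_cast Int.mul_sub_one_le_of_dvd_of_eq (by omega) (by exact_mod_cast Fintype.card_pos)
    hdvd (le_antisymm hle hge)

/-- Seed size lower bound for nontrivial OCFU hash functions: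
|S|(|A| − 1) ≥ |A|(|X| − 1). -/
theorem ocfu_seed_size_lb {X S A : Type*} [Fintype X] [Fintype S] [Fintype A]
    [Nonempty X] [Nonempty S] [Nonempty A] [DecidableEq A]
    (hA : 2 ≤ Fintype.card A) (hAX : Fintype.card A < Fintype.card X)
    (ε : ℝ)
    (hεopt : ε = ((Fintype.card X : ℝ) - (Fintype.card A : ℝ)) /
      ((Fintype.card A : ℝ) * ((Fintype.card X : ℝ) - 1)))
    (f : X × S → A)
    (hACFU1 : ∀ (x : X) (α : A),
      (Fintype.card A : ℝ) * ((Finset.univ.filter fun s : S => f (x, s) = α).card : ℝ)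
        = (Fintype.card S : ℝ))
    (hACFU2 : ∀ (x x' : X), x ≠ x' → ∀ (α : A),
      (Fintype.card A : ℝ) *
          ((Finset.univ.filter fun s : S => f (x, s) = α ∧ f (x', s) = α).card : ℝ)
        ≤ ε * (Fintype.card S : ℝ)) :
    (Fintype.card S : ℝ) * ((Fintype.card A : ℝ) - 1)
      ≥ (Fintype.card A : ℝ) * ((Fintype.card X : ℝ) - 1) :=
  ocfu_seed_size_lb_general hA hAX ε hεopt f hACFU1 hACFU2
end

section
/- Let Y, S, A be finite nonempty sets, let ε ≥ 0 be real, let ∘ : A × A → A be a quasigroup operation (for every β ∈ A the map γ ↦ γ ∘ β is a bijection of A, and for every α ∈ A the map β ↦ α ∘ β is a bijection of A), let g : Y × S → A, and define the point extension ǧ : (Y × A) × S → A by ǧ((y, β), s) = g(y,s) ∘ β. Then g is an ε-almost strongly universal (ε-ASU) hash function if and only if ǧ is an ε-almost collision-flat universal (ε-ACFU) hash function. -/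
/-!
Right multiplication by `β` is a bijection of `A`, so the event `ǧ((y, β), s) = α` is the event
`g(y, s) = γ` for the unique `γ` with `γ ∘ β = α`; this transports uniformity both ways and turns
a collision of `ǧ` at `(y, β) ≠ (y', β')` into the joint event `g(y, s) = γ ∧ g(y', s) = γ'`.
If `y = y'` there are no collisions at all, since left multiplication by `g(y, s)` is injective.
Conversely, every pair `(γ, γ')` arises this way: fix `β`, and choose `β'` with `γ' ∘ β' = γ ∘ β`.
-/

open Finset

namespace Hashing

variable {X Y S A : Type*}

section

variable [Fintype S] [Fintype A] [DecidableEq A]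

def IsUniform (f : X × S → A) : Prop :=
  ∀ (x : X) (α : A), (Fintype.card A : ℝ) * (#{s | f (x, s) = α} : ℝ) = Fintype.card S

def IsAlmostStronglyUniversal (ε : ℝ) (f : X × S → A) : Prop :=
  IsUniform f ∧ ∀ x x' : X, x ≠ x' → ∀ α α' : A,
    (Fintype.card A : ℝ) * (#{s | f (x, s) = α ∧ f (x', s) = α'} : ℝ) ≤ ε * Fintype.card S

def IsAlmostCollisionFlatUniversal (ε : ℝ) (f : X × S → A) : Prop :=
  IsUniform f ∧ ∀ x x' : X, x ≠ x' → ∀ α : A,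
    (Fintype.card A : ℝ) * (#{s | f (x, s) = α ∧ f (x', s) = α} : ℝ) ≤ ε * Fintype.card S

end

def pointExtension (op : A → A → A) (g : Y × S → A) : (Y × A) × S → A :=
  fun p => op (g (p.1.1, p.2)) p.1.2

variable {op : A → A → A} {g : Y × S → A}

theorem pointExtension_eq_op_iff (hopr : ∀ β, Function.Injective (op · β))
    (y : Y) (β γ : A) (s : S) : pointExtension op g ((y, β), s) = op γ β ↔ g (y, s) = γ :=
  (hopr β).eq_iff

variable [Fintype S] [DecidableEq A]

theorem card_collision_pointExtension_of_ne (hopl : ∀ α, Function.Injective (op α))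
    (y : Y) {β β' : A} (hβ : β ≠ β') (α : A) :
    #{s | pointExtension op g ((y, β), s) = α ∧ pointExtension op g ((y, β'), s) = α} = 0 :=
  card_eq_zero.2 <| filter_eq_empty_iff.2 fun s _ ⟨h, h'⟩ => hβ <| hopl (g (y, s)) (h.trans h'.symm)

theorem card_collision_pointExtension (hopr : ∀ β, Function.Injective (op · β))
    (y y' : Y) {α β β' γ γ' : A} (hγ : op γ β = α) (hγ' : op γ' β' = α) :
    #{s | pointExtension op g ((y, β), s) = α ∧ pointExtension op g ((y', β'), s) = α}
      = #{s | g (y, s) = γ ∧ g (y', s) = γ'} := by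
  refine congrArg card (filter_congr fun s _ => ?_)
  rw [← pointExtension_eq_op_iff hopr y β, ← pointExtension_eq_op_iff hopr y' β', hγ, hγ']

variable [Fintype A]

theorem IsUniform.pointExtension (hopr : ∀ β, Function.Bijective (op · β)) (hg : IsUniform g) :
    IsUniform (Hashing.pointExtension op g) := by
  rintro ⟨y, β⟩ α
  obtain ⟨γ, rfl⟩ := (hopr β).surjective α
  simpa only [pointExtension_eq_op_iff fun β => (hopr β).injective] using hg y γ

theorem IsUniform.of_pointExtension [Nonempty A] (hopr : ∀ β, Function.Injective (op · β))
    (hg : IsUniform (Hashing.pointExtension op g)) : IsUniform g := by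
  intro y γ
  obtain ⟨β⟩ := ‹Nonempty A›
  simpa only [pointExtension_eq_op_iff hopr] using hg (y, β) (op γ β)

theorem IsAlmostStronglyUniversal.pointExtension {ε : ℝ} (hε : 0 ≤ ε)
    (hopr : ∀ β, Function.Bijective (op · β)) (hopl : ∀ α, Function.Injective (op α))
    (hg : IsAlmostStronglyUniversal ε g) :
    IsAlmostCollisionFlatUniversal ε (Hashing.pointExtension op g) := by
  refine ⟨IsUniform.pointExtension hopr hg.1, ?_⟩
  rintro ⟨y, β⟩ ⟨y', β'⟩ hne α
  by_cases hy : y = y'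
  · subst hy
    have hβ : β ≠ β' := fun h => hne (congrArg _ h)
    rw [card_collision_pointExtension_of_ne hopl y hβ, Nat.cast_zero, mul_zero]
    positivity
  · obtain ⟨γ, rfl⟩ : ∃ γ, op γ β = α := (hopr β).surjective α
    obtain ⟨γ', hγ'⟩ : ∃ γ', op γ' β' = op γ β := (hopr β').surjective _
    rw [card_collision_pointExtension (fun β => (hopr β).injective) y y' rfl hγ']
    exact hg.2 y y' hy γ γ'

theorem IsAlmostCollisionFlatUniversal.of_pointExtension [Nonempty A] {ε : ℝ}
    (hopr : ∀ β, Function.Injective (op · β)) (hopl : ∀ α, Function.Surjective (op α))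
    (hg : IsAlmostCollisionFlatUniversal ε (Hashing.pointExtension op g)) :
    IsAlmostStronglyUniversal ε g := by
  refine ⟨IsUniform.of_pointExtension hopr hg.1, fun y y' hy γ γ' => ?_⟩
  obtain ⟨β⟩ := ‹Nonempty A›
  obtain ⟨β', hβ'⟩ := hopl γ' (op γ β)
  have hne : (y, β) ≠ (y', β') := fun h => hy (congrArg Prod.fst h)
  rw [← card_collision_pointExtension hopr y y' rfl hβ']
  exact hg.2 _ _ hne _

end Hashing

theorem point_extension_asu_iff_acfu_general {Y S A : Type*} [Fintype S] [Fintype A]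
    [Nonempty A] [DecidableEq A]
    (ε : ℝ) (hε : 0 ≤ ε)
    (op : A → A → A)
    (hopr : ∀ β : A, Function.Bijective fun γ : A => op γ β)
    (hopl : ∀ α : A, Function.Bijective fun β : A => op α β)
    (g : Y × S → A) (gcheck : (Y × A) × S → A)
    (hgcheck : ∀ (y : Y) (β : A) (s : S), gcheck ((y, β), s) = op (g (y, s)) β) :
    ((∀ (y : Y) (α : A),
      (Fintype.card A : ℝ) * ((Finset.univ.filter fun s : S => g (y, s) = α).card : ℝ)
        = (Fintype.card S : ℝ)) ∧
    (∀ (y y' : Y), y ≠ y' → ∀ (α α' : A),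
      (Fintype.card A : ℝ) *
          ((Finset.univ.filter fun s : S => g (y, s) = α ∧ g (y', s) = α').card : ℝ)
        ≤ ε * (Fintype.card S : ℝ)))
    ↔
    ((∀ (p : Y × A) (α : A),
      (Fintype.card A : ℝ) * ((Finset.univ.filter fun s : S => gcheck (p, s) = α).card : ℝ)
        = (Fintype.card S : ℝ)) ∧
    (∀ (p p' : Y × A), p ≠ p' → ∀ (α : A),
      (Fintype.card A : ℝ) *
          ((Finset.univ.filter fun s : S => gcheck (p, s) = α ∧ gcheck (p', s) = α).card : ℝ)
        ≤ ε * (Fintype.card S : ℝ))) := by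
  obtain rfl : gcheck = Hashing.pointExtension op g := funext fun ⟨⟨y, β⟩, s⟩ => hgcheck y β s
  exact ⟨Hashing.IsAlmostStronglyUniversal.pointExtension hε hopr fun α => (hopl α).injective,
    Hashing.IsAlmostCollisionFlatUniversal.of_pointExtension (fun β => (hopr β).injective)
      fun α => (hopl α).surjective⟩

/-- g is an ε-ASU hash function iff its point extension
ǧ((y, β), s) = g(y,s) ∘ β (with ∘ a quasigroup operation) is an ε-ACFU hash
function. -/
theorem point_extension_asu_iff_acfu {Y S A : Type*} [Fintype Y] [Fintype S] [Fintype A]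
    [Nonempty Y] [Nonempty S] [Nonempty A] [DecidableEq Y] [DecidableEq A]
    (ε : ℝ) (hε : 0 ≤ ε)
    (op : A → A → A)
    (hopr : ∀ β : A, Function.Bijective fun γ : A => op γ β)
    (hopl : ∀ α : A, Function.Bijective fun β : A => op α β)
    (g : Y × S → A) (gcheck : (Y × A) × S → A)
    (hgcheck : ∀ (y : Y) (β : A) (s : S), gcheck ((y, β), s) = op (g (y, s)) β) :
    ((∀ (y : Y) (α : A),
      (Fintype.card A : ℝ) * ((Finset.univ.filter fun s : S => g (y, s) = α).card : ℝ)
        = (Fintype.card S : ℝ)) ∧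
    (∀ (y y' : Y), y ≠ y' → ∀ (α α' : A),
      (Fintype.card A : ℝ) *
          ((Finset.univ.filter fun s : S => g (y, s) = α ∧ g (y', s) = α').card : ℝ)
        ≤ ε * (Fintype.card S : ℝ)))
    ↔
    ((∀ (p : Y × A) (α : A),
      (Fintype.card A : ℝ) * ((Finset.univ.filter fun s : S => gcheck (p, s) = α).card : ℝ)
        = (Fintype.card S : ℝ)) ∧
    (∀ (p p' : Y × A), p ≠ p' → ∀ (α : A),
      (Fintype.card A : ℝ) *
          ((Finset.univ.filter fun s : S => gcheck (p, s) = α ∧ gcheck (p', s) = α).card : ℝ)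
        ≤ ε * (Fintype.card S : ℝ))) :=
  point_extension_asu_iff_acfu_general ε hε op hopr hopl g gcheck hgcheck
end

section
/- Let Y, H be finite nonempty sets, let A be a finite (additive) abelian group, let ε ≥ 0 be real, and let f : (Y × A) × (H × A) → A be an ε-almost collision-flat universal (ε-ACFU) hash function. Then the following are equivalent: (1) there exist an ε-almost universal hash function g₁ : (Y × A) × H → A with f((y,β),(h,γ)) = g₁((y,β), h) + γ for all y, β, h, γ, and an ε-almost strongly universal hash function g₂ : Y × (H × A) → A with f((y,β),(h,γ)) = g₂(y,(h,γ)) + β for all y, β, h, γ; (2) there exists an ε-balanced function a : Y × H → A such that f((y,β),(h,γ)) = a(y,h) + β + γ for all y, β, h, γ. -/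
/-!
Since `g₁ ((y, β), h) = f ((y, β), (h, 0))` and `g₂ (y, (h, γ)) = f ((y, 0), (h, γ))`, the two
extension identities make `f` a translate in `β` and in `γ` separately, so
`f ((y, β), (h, γ)) = a (y, h) + β + γ` with `a (y, h) = f ((y, 0), (h, 0))`.
For a function of this shape the collision set of `(y, β)` and `(y', β')` under `g₁` is the set of
seeds where `a (y, ·) - a (y', ·)` takes the value `β' - β`, and the joint preimage of `(α, α')`
under `g₂` is in bijection (via `h ↦ (h, α - a (y, h))`) with the set where it takes the value
`α - α'`. Hence `g₁` is `ε`-AU and `g₂` is `ε`-ASU exactly when `a` is `ε`-balanced.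
-/

open Finset

section HashFunctions

variable {X S Y H A : Type*} [Fintype S] [Fintype H] [DecidableEq A]

def IsAlmostUniversal (ε : ℝ) (g : X × S → A) : Prop :=
  ∀ x x' : X, x ≠ x' →
    ((univ.filter fun s : S => g (x, s) = g (x', s)).card : ℝ) ≤ ε * Fintype.card S

def IsAlmostStronglyUniversal [Fintype A] (ε : ℝ) (g : X × S → A) : Prop :=
  (∀ (x : X) (α : A),
      (Fintype.card A : ℝ) * ((univ.filter fun s : S => g (x, s) = α).card : ℝ)
        = Fintype.card S) ∧
    ∀ x x' : X, x ≠ x' → ∀ α α' : A,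
      (Fintype.card A : ℝ) *
          ((univ.filter fun s : S => g (x, s) = α ∧ g (x', s) = α').card : ℝ)
        ≤ ε * Fintype.card S

variable [AddCommGroup A]

def IsBalanced (ε : ℝ) (a : Y × H → A) : Prop :=
  ∀ y y' : Y, y ≠ y' → ∀ β : A,
    ((univ.filter fun h : H => a (y, h) - a (y', h) = β).card : ℝ) ≤ ε * Fintype.card H

lemma filter_add_eq_add_eq (a : Y × H → A) (y y' : Y) (β β' : A) :
    (univ.filter fun h : H => a (y, h) + β = a (y', h) + β') =
      univ.filter fun h : H => a (y, h) - a (y', h) = β' - β := by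
  ext h
  simp only [mem_filter, mem_univ, true_and, sub_eq_sub_iff_add_eq_add, add_comm β']

lemma IsAlmostUniversal.isBalanced {ε : ℝ} {a : Y × H → A} {g : (Y × A) × H → A}
    (hg : IsAlmostUniversal ε g) (hga : ∀ y β h, g ((y, β), h) = a (y, h) + β) :
    IsBalanced ε a := by
  intro y y' hyy' β
  have hne : ((y, 0) : Y × A) ≠ (y', β) := fun e => hyy' (congrArg Prod.fst e)
  have := hg _ _ hne
  simp only [hga] at this
  rwa [filter_add_eq_add_eq, sub_zero] at this

lemma IsBalanced.isAlmostUniversal {ε : ℝ} (hε : 0 ≤ ε) {a : Y × H → A}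
    (ha : IsBalanced ε a) : IsAlmostUniversal ε fun p : (Y × A) × H => a (p.1.1, p.2) + p.1.2 := by
  rintro ⟨y, β⟩ ⟨y', β'⟩ hne
  dsimp only
  rw [filter_add_eq_add_eq]
  by_cases hyy' : y = y'
  · subst hyy'
    have hββ' : β' - β ≠ 0 := sub_ne_zero.2 fun e => hne (by rw [e])
    simp only [sub_self, hββ'.symm, filter_false, card_empty, Nat.cast_zero]
    positivity
  · exact ha y y' hyy' (β' - β)

lemma card_filter_add_snd_eq [Fintype A] (b : H → A) (α : A) :
    (univ.filter fun t : H × A => b t.1 + t.2 = α).card = Fintype.card H := by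
  rw [← card_univ]
  refine card_bij' (fun t _ => t.1) (fun h _ => (h, α - b h)) ?_ ?_ ?_ ?_ <;>
    simp only [mem_filter, mem_univ, true_and]
  · simp
  · intros; abel
  · rintro ⟨h, γ⟩ rfl
    simp
  · simp

lemma card_filter_add_snd_eq_and_add_snd_eq [Fintype A] (b b' : H → A) (α α' : A) :
    (univ.filter fun t : H × A => b t.1 + t.2 = α ∧ b' t.1 + t.2 = α').card =
      (univ.filter fun h : H => b h - b' h = α - α').card := by
  refine card_bij' (fun t _ => t.1) (fun h _ => (h, α - b h)) ?_ ?_ ?_ ?_ <;>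
    simp only [mem_filter, mem_univ, true_and]
  · rintro ⟨h, γ⟩ ⟨rfl, rfl⟩
    abel
  · intro h hd
    refine ⟨by abel, ?_⟩
    rw [← sub_sub_cancel α α', ← hd]
    abel
  · rintro ⟨h, γ⟩ ⟨rfl, -⟩
    simp
  · simp

lemma IsBalanced.isAlmostStronglyUniversal [Fintype A] {ε : ℝ} {a : Y × H → A}
    (ha : IsBalanced ε a) :
    IsAlmostStronglyUniversal ε fun p : Y × (H × A) => a (p.1, p.2.1) + p.2.2 := by
  refine ⟨fun y α => ?_, fun y y' hyy' α α' => ?_⟩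
  · rw [card_filter_add_snd_eq (fun h => a (y, h)), Fintype.card_prod]
    push_cast
    ring
  · rw [card_filter_add_snd_eq_and_add_snd_eq (fun h => a (y, h)) (fun h => a (y', h)),
      Fintype.card_prod]
    push_cast
    calc (Fintype.card A : ℝ) * _ ≤ Fintype.card A * (ε * Fintype.card H) :=
          mul_le_mul_of_nonneg_left (ha y y' hyy' (α - α')) (Nat.cast_nonneg _)
      _ = ε * (Fintype.card H * Fintype.card A) := by ring

end HashFunctions

lemma eq_add_add_of_seed_extension_of_point_extension {Y H A : Type*} [AddCommGroup A]
    {f : (Y × A) × (H × A) → A} {g₁ : (Y × A) × H → A} {g₂ : Y × (H × A) → A}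
    (hg₁ : ∀ y β h γ, f ((y, β), (h, γ)) = g₁ ((y, β), h) + γ)
    (hg₂ : ∀ y β h γ, f ((y, β), (h, γ)) = g₂ (y, (h, γ)) + β) (y : Y) (β : A) (h : H) (γ : A) :
    f ((y, β), (h, γ)) = f ((y, 0), (h, 0)) + β + γ := by
  rw [hg₂, ← add_zero (g₂ _), ← hg₂, hg₁, hg₁ y 0 h 0]
  abel

theorem seed_and_point_extension_iff_balanced_general {Y H A : Type*}
    [Fintype Y] [Fintype H] [Fintype A]
    [AddCommGroup A] [DecidableEq A]
    (ε : ℝ) (hε : 0 ≤ ε)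
    (f : (Y × A) × (H × A) → A) :
    ((∃ g₁ : (Y × A) × H → A,
        (∀ (p p' : Y × A), p ≠ p' →
          ((Finset.univ.filter fun h : H => g₁ (p, h) = g₁ (p', h)).card : ℝ)
            ≤ ε * (Fintype.card H : ℝ)) ∧
        (∀ (y : Y) (β : A) (h : H) (γ : A),
          f ((y, β), (h, γ)) = g₁ ((y, β), h) + γ)) ∧
     (∃ g₂ : Y × (H × A) → A,
        (∀ (y : Y) (α : A),
          (Fintype.card A : ℝ) *
              ((Finset.univ.filter fun t : H × A => g₂ (y, t) = α).card : ℝ)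
            = (Fintype.card (H × A) : ℝ)) ∧
        (∀ (y y' : Y), y ≠ y' → ∀ (α α' : A),
          (Fintype.card A : ℝ) *
              ((Finset.univ.filter fun t : H × A => g₂ (y, t) = α ∧ g₂ (y', t) = α').card : ℝ)
            ≤ ε * (Fintype.card (H × A) : ℝ)) ∧
        (∀ (y : Y) (β : A) (h : H) (γ : A),
          f ((y, β), (h, γ)) = g₂ (y, (h, γ)) + β)))
    ↔
    (∃ a : Y × H → A,
      (∀ (y y' : Y), y ≠ y' → ∀ β : A,
        ((Finset.univ.filter fun h : H => a (y, h) - a (y', h) = β).card : ℝ)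
          ≤ ε * (Fintype.card H : ℝ)) ∧
      (∀ (y : Y) (β : A) (h : H) (γ : A),
        f ((y, β), (h, γ)) = a (y, h) + β + γ)) := by
  constructor
  · rintro ⟨⟨g₁, (hAU : IsAlmostUniversal ε g₁), hg₁⟩, ⟨g₂, -, -, hg₂⟩⟩
    have hf := eq_add_add_of_seed_extension_of_point_extension hg₁ hg₂
    have hg₁a : ∀ y β h, g₁ ((y, β), h) = f ((y, 0), (h, 0)) + β := by
      intro y β h
      rw [← add_zero (g₁ _), ← hg₁, hf, add_zero]
    have hb : IsBalanced ε (fun p : Y × H => f ((p.1, 0), (p.2, 0))) := hAU.isBalanced hg₁a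
    exact ⟨fun p => f ((p.1, 0), (p.2, 0)), hb, hf⟩
  · rintro ⟨a, (hbal : IsBalanced ε a), ha⟩
    obtain ⟨hASU1, hASU2⟩ := hbal.isAlmostStronglyUniversal
    refine ⟨⟨fun p => a (p.1.1, p.2) + p.1.2, hbal.isAlmostUniversal hε, ha⟩,
      ⟨fun p => a (p.1, p.2.1) + p.2.2, hASU1, hASU2,
        fun y β h γ => (ha y β h γ).trans (add_right_comm _ _ _)⟩⟩

/-- An ε-ACFU hash function f on (Y × A) × (H × A) is simultaneously
a seed extension of an ε-AU hash function and a point extension of an ε-ASU hash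
function (w.r.t. the abelian group structure of A) iff it has the form
f((y,β),(h,γ)) = a(y,h) + β + γ for an ε-balanced function a. -/
theorem seed_and_point_extension_iff_balanced {Y H A : Type*}
    [Fintype Y] [Fintype H] [Fintype A]
    [Nonempty Y] [Nonempty H] [AddCommGroup A] [DecidableEq Y] [DecidableEq A]
    (ε : ℝ) (hε : 0 ≤ ε)
    (f : (Y × A) × (H × A) → A)
    (hACFU1 : ∀ (p : Y × A) (α : A),
      (Fintype.card A : ℝ) *
          ((Finset.univ.filter fun t : H × A => f (p, t) = α).card : ℝ)
        = (Fintype.card (H × A) : ℝ))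
    (hACFU2 : ∀ (p p' : Y × A), p ≠ p' → ∀ (α : A),
      (Fintype.card A : ℝ) *
          ((Finset.univ.filter fun t : H × A => f (p, t) = α ∧ f (p', t) = α).card : ℝ)
        ≤ ε * (Fintype.card (H × A) : ℝ)) :
    ((∃ g₁ : (Y × A) × H → A,
        (∀ (p p' : Y × A), p ≠ p' →
          ((Finset.univ.filter fun h : H => g₁ (p, h) = g₁ (p', h)).card : ℝ)
            ≤ ε * (Fintype.card H : ℝ)) ∧
        (∀ (y : Y) (β : A) (h : H) (γ : A),
          f ((y, β), (h, γ)) = g₁ ((y, β), h) + γ)) ∧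
     (∃ g₂ : Y × (H × A) → A,
        (∀ (y : Y) (α : A),
          (Fintype.card A : ℝ) *
              ((Finset.univ.filter fun t : H × A => g₂ (y, t) = α).card : ℝ)
            = (Fintype.card (H × A) : ℝ)) ∧
        (∀ (y y' : Y), y ≠ y' → ∀ (α α' : A),
          (Fintype.card A : ℝ) *
              ((Finset.univ.filter fun t : H × A => g₂ (y, t) = α ∧ g₂ (y', t) = α').card : ℝ)
            ≤ ε * (Fintype.card (H × A) : ℝ)) ∧
        (∀ (y : Y) (β : A) (h : H) (γ : A),
          f ((y, β), (h, γ)) = g₂ (y, (h, γ)) + β)))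
    ↔
    (∃ a : Y × H → A,
      (∀ (y y' : Y), y ≠ y' → ∀ β : A,
        ((Finset.univ.filter fun h : H => a (y, h) - a (y', h) = β).card : ℝ)
          ≤ ε * (Fintype.card H : ℝ)) ∧
      (∀ (y : Y) (β : A) (h : H) (γ : A),
        f ((y, β), (h, γ)) = a (y, h) + β + γ)) :=
  seed_and_point_extension_iff_balanced_general ε hε f
end

section
/- Let X₁, S₁, A₁, S₂, A₂ be finite nonempty sets and ε₁, ε₂ ≥ 0 real numbers. If f₁ : X₁ × S₁ → A₁ is an ε₁-almost strongly universal (ε₁-ASU) hash function and f₂ : A₁ × S₂ → A₂ is an ε₂-almost collision-flat universal (ε₂-ACFU) hash function, then the function f : X₁ × (S₁ × S₂) → A₂ defined by f(x₁, (s₁, s₂)) = f₂(f₁(x₁, s₁), s₂) is an ε-almost collision-flat universal hash function with ε = ε₁·ε₂·(|A₁| − 1) + ε₁. -/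
/-! Split the seeds `(s₁, s₂)` according to whether `f₁` collides on `x, x'` at `s₁`. At a
colliding `s₁` the two inputs of `f₂` coincide, so ACFU1 gives `|S₂|/|A₂|` good `s₂`; summing ASU2
over the diagonal of `A₁ × A₁` bounds the number of such `s₁` by `ε₁|S₁|`. At a non-colliding `s₁`
ACFU2 gives at most `ε₂|S₂|/|A₂|` good `s₂`, and summing ASU2 over the off-diagonal bounds the
number of such `s₁` by `ε₁(|A₁| - 1)|S₁|`. -/

open Finset

lemma card_filter_prod_eq_sum {α β : Type*} [Fintype α] [Fintype β]
    (p : α → β → Prop) [∀ a b, Decidable (p a b)] :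
    #{t : α × β | p t.1 t.2} = ∑ a, #{b | p a b} := by
  simp only [card_filter, Fintype.sum_prod_type]

section PairCounting

variable {S A : Type*} [Fintype S] [Fintype A] [DecidableEq A]

lemma card_mul_card_filter_pair_mem_le (g h : S → A) (P : Finset (A × A)) {c : ℝ}
    (hc : ∀ p ∈ P, (Fintype.card A : ℝ) * #{s | g s = p.1 ∧ h s = p.2} ≤ c) :
    (Fintype.card A : ℝ) * #{s | (g s, h s) ∈ P} ≤ #P * c := by
  have hfib : #{s | (g s, h s) ∈ P} = ∑ p ∈ P, #{s | g s = p.1 ∧ h s = p.2} := by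
    rw [card_eq_sum_card_fiberwise (f := fun s => (g s, h s)) (s := {s | (g s, h s) ∈ P})
      (t := P) fun s hs => (mem_filter.mp hs).2]
    refine sum_congr rfl fun p hp => congrArg card ?_
    ext s
    simp only [mem_filter, mem_univ, true_and, Prod.ext_iff]
    exact ⟨fun hs => hs.2, fun hs => ⟨by rwa [hs.1, hs.2], hs⟩⟩
  rw [hfib, Nat.cast_sum, mul_sum, ← nsmul_eq_mul]
  exact sum_le_card_nsmul P _ c hc

variable [Nonempty A] {g h : S → A} {c : ℝ}

lemma card_filter_eq_le_of_card_mul_le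
    (hc : ∀ a a', (Fintype.card A : ℝ) * #{s | g s = a ∧ h s = a'} ≤ c) :
    (#{s | g s = h s} : ℝ) ≤ c := by
  have key := card_mul_card_filter_pair_mem_le g h univ.diag fun p _ => hc p.1 p.2
  simp only [mem_diag, mem_univ, true_and, diag_card, card_univ] at key
  exact le_of_mul_le_mul_left key (by exact_mod_cast Fintype.card_pos)

lemma card_filter_ne_le_of_card_mul_le
    (hc : ∀ a a', (Fintype.card A : ℝ) * #{s | g s = a ∧ h s = a'} ≤ c) :
    (#{s | g s ≠ h s} : ℝ) ≤ ((Fintype.card A : ℝ) - 1) * c := by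
  have key := card_mul_card_filter_pair_mem_le g h univ.offDiag fun p _ => hc p.1 p.2
  simp only [mem_offDiag, mem_univ, true_and, offDiag_card, card_univ] at key
  rw [Nat.cast_sub (Nat.le_mul_self _), Nat.cast_mul, ← mul_sub_one, mul_assoc] at key
  exact le_of_mul_le_mul_left key (by exact_mod_cast Fintype.card_pos)

end PairCounting

section Composition

variable {S₁ A₁ S₂ A₂ : Type*} [Fintype S₁] [Fintype S₂] [Fintype A₂] [DecidableEq A₂]
  {f₂ : A₁ × S₂ → A₂}

lemma card_mul_card_filter_comp_eq
    (hf₂ : ∀ a α, (Fintype.card A₂ : ℝ) * #{s | f₂ (a, s) = α} = Fintype.card S₂)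
    (u : S₁ → A₁) (α : A₂) :
    (Fintype.card A₂ : ℝ) * #{t : S₁ × S₂ | f₂ (u t.1, t.2) = α}
      = Fintype.card (S₁ × S₂) := by
  rw [card_filter_prod_eq_sum (fun s₁ s₂ => f₂ (u s₁, s₂) = α), Nat.cast_sum, mul_sum]
  simp only [hf₂, sum_const, card_univ, Fintype.card_prod, nsmul_eq_mul, Nat.cast_mul]

lemma card_mul_card_filter_comp_collision_le [DecidableEq A₁] {ε₂ : ℝ}
    (hf₂ : ∀ a α, (Fintype.card A₂ : ℝ) * #{s | f₂ (a, s) = α} = Fintype.card S₂)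
    (hf₂' : ∀ a a', a ≠ a' → ∀ α,
      (Fintype.card A₂ : ℝ) * #{s | f₂ (a, s) = α ∧ f₂ (a', s) = α} ≤ ε₂ * Fintype.card S₂)
    (u v : S₁ → A₁) (α : A₂) :
    (Fintype.card A₂ : ℝ) * #{t : S₁ × S₂ | f₂ (u t.1, t.2) = α ∧ f₂ (v t.1, t.2) = α}
      ≤ #{s | u s = v s} * Fintype.card S₂ + #{s | u s ≠ v s} * (ε₂ * Fintype.card S₂) := by
  have pointwise : ∀ s₁, (Fintype.card A₂ : ℝ) * #{s | f₂ (u s₁, s) = α ∧ f₂ (v s₁, s) = α}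
      ≤ if u s₁ = v s₁ then (Fintype.card S₂ : ℝ) else ε₂ * Fintype.card S₂ := by
    intro s₁
    split_ifs with huv
    · simpa only [huv, and_self] using (hf₂ (v s₁) α).le
    · exact hf₂' _ _ huv α
  rw [card_filter_prod_eq_sum (fun s₁ s₂ => f₂ (u s₁, s₂) = α ∧ f₂ (v s₁, s₂) = α),
    Nat.cast_sum, mul_sum]
  refine (sum_le_sum fun s₁ _ => pointwise s₁).trans_eq ?_
  rw [sum_ite, sum_const, sum_const, nsmul_eq_mul, nsmul_eq_mul]

end Composition

theorem concat_asu_acfu_general {X₁ S₁ A₁ S₂ A₂ : Type*}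
    [Fintype S₁] [Fintype A₁] [Fintype S₂] [Fintype A₂]
    [Nonempty A₁]
    [DecidableEq A₁] [DecidableEq A₂]
    (ε₁ ε₂ : ℝ) (hε₂ : 0 ≤ ε₂)
    (f₁ : X₁ × S₁ → A₁) (f₂ : A₁ × S₂ → A₂)
    (hASU2 : ∀ (x x' : X₁), x ≠ x' → ∀ (α α' : A₁),
      (Fintype.card A₁ : ℝ) *
          ((Finset.univ.filter fun s : S₁ => f₁ (x, s) = α ∧ f₁ (x', s) = α').card : ℝ)
        ≤ ε₁ * (Fintype.card S₁ : ℝ))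
    (hACFU1 : ∀ (a : A₁) (α : A₂),
      (Fintype.card A₂ : ℝ) * ((Finset.univ.filter fun s : S₂ => f₂ (a, s) = α).card : ℝ)
        = (Fintype.card S₂ : ℝ))
    (hACFU2 : ∀ (a a' : A₁), a ≠ a' → ∀ (α : A₂),
      (Fintype.card A₂ : ℝ) *
          ((Finset.univ.filter fun s : S₂ => f₂ (a, s) = α ∧ f₂ (a', s) = α).card : ℝ)
        ≤ ε₂ * (Fintype.card S₂ : ℝ)) :
    (∀ (x : X₁) (α : A₂),
      (Fintype.card A₂ : ℝ) *
          ((Finset.univ.filter fun t : S₁ × S₂ => f₂ (f₁ (x, t.1), t.2) = α).card : ℝ)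
        = (Fintype.card (S₁ × S₂) : ℝ)) ∧
    (∀ (x x' : X₁), x ≠ x' → ∀ (α : A₂),
      (Fintype.card A₂ : ℝ) *
          ((Finset.univ.filter fun t : S₁ × S₂ =>
              f₂ (f₁ (x, t.1), t.2) = α ∧ f₂ (f₁ (x', t.1), t.2) = α).card : ℝ)
        ≤ (ε₁ * ε₂ * ((Fintype.card A₁ : ℝ) - 1) + ε₁) * (Fintype.card (S₁ × S₂) : ℝ)) := by
  refine ⟨fun x => card_mul_card_filter_comp_eq hACFU1 (fun s => f₁ (x, s)),
    fun x x' hx α => ?_⟩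
  have hEq := card_filter_eq_le_of_card_mul_le (hASU2 x x' hx)
  have hNe := card_filter_ne_le_of_card_mul_le (hASU2 x x' hx)
  have hS₂ : 0 ≤ ε₂ * Fintype.card S₂ := mul_nonneg hε₂ (Nat.cast_nonneg _)
  calc _ ≤ _ := card_mul_card_filter_comp_collision_le hACFU1 hACFU2
        (fun s => f₁ (x, s)) (fun s => f₁ (x', s)) α
    _ ≤ ε₁ * Fintype.card S₁ * Fintype.card S₂
          + ((Fintype.card A₁ : ℝ) - 1) * (ε₁ * Fintype.card S₁) * (ε₂ * Fintype.card S₂) := by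
        gcongr
    _ = _ := by rw [Fintype.card_prod, Nat.cast_mul]; ring

/-- Concatenation of an ε₁-ASU hash function with an ε₂-ACFU hash
function yields an (ε₁ε₂(|A₁| − 1) + ε₁)-ACFU hash function. -/
theorem concat_asu_acfu {X₁ S₁ A₁ S₂ A₂ : Type*}
    [Fintype X₁] [Fintype S₁] [Fintype A₁] [Fintype S₂] [Fintype A₂]
    [Nonempty X₁] [Nonempty S₁] [Nonempty A₁] [Nonempty S₂] [Nonempty A₂]
    [DecidableEq A₁] [DecidableEq A₂]
    (ε₁ ε₂ : ℝ) (hε₁ : 0 ≤ ε₁) (hε₂ : 0 ≤ ε₂)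
    (f₁ : X₁ × S₁ → A₁) (f₂ : A₁ × S₂ → A₂)
    (hASU1 : ∀ (x : X₁) (α : A₁),
      (Fintype.card A₁ : ℝ) * ((Finset.univ.filter fun s : S₁ => f₁ (x, s) = α).card : ℝ)
        = (Fintype.card S₁ : ℝ))
    (hASU2 : ∀ (x x' : X₁), x ≠ x' → ∀ (α α' : A₁),
      (Fintype.card A₁ : ℝ) *
          ((Finset.univ.filter fun s : S₁ => f₁ (x, s) = α ∧ f₁ (x', s) = α').card : ℝ)
        ≤ ε₁ * (Fintype.card S₁ : ℝ))
    (hACFU1 : ∀ (a : A₁) (α : A₂),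
      (Fintype.card A₂ : ℝ) * ((Finset.univ.filter fun s : S₂ => f₂ (a, s) = α).card : ℝ)
        = (Fintype.card S₂ : ℝ))
    (hACFU2 : ∀ (a a' : A₁), a ≠ a' → ∀ (α : A₂),
      (Fintype.card A₂ : ℝ) *
          ((Finset.univ.filter fun s : S₂ => f₂ (a, s) = α ∧ f₂ (a', s) = α).card : ℝ)
        ≤ ε₂ * (Fintype.card S₂ : ℝ)) :
    (∀ (x : X₁) (α : A₂),
      (Fintype.card A₂ : ℝ) *
          ((Finset.univ.filter fun t : S₁ × S₂ => f₂ (f₁ (x, t.1), t.2) = α).card : ℝ)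
        = (Fintype.card (S₁ × S₂) : ℝ)) ∧
    (∀ (x x' : X₁), x ≠ x' → ∀ (α : A₂),
      (Fintype.card A₂ : ℝ) *
          ((Finset.univ.filter fun t : S₁ × S₂ =>
              f₂ (f₁ (x, t.1), t.2) = α ∧ f₂ (f₁ (x', t.1), t.2) = α).card : ℝ)
        ≤ (ε₁ * ε₂ * ((Fintype.card A₁ : ℝ) - 1) + ε₁) * (Fintype.card (S₁ × S₂) : ℝ)) :=
  concat_asu_acfu_general ε₁ ε₂ hε₂ f₁ f₂ hASU2 hACFU1 hACFU2
end

section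
/- Let X, S, A be finite nonempty sets, ε ≥ 0 real, and let f : X × S → A be an ε-almost collision-flat universal (ε-ACFU) hash function. Then for every α ∈ A and every nonnegative function p : X → ℝ, ∑_{x ∈ X} ∑_{x' ∈ X} p(x)·p(x')·|{s ∈ S : f(x,s) = f(x',s) = α}| ≤ (|S|/|A|) · ( (1 − ε)·∑_{x ∈ X} p(x)² + ε·(∑_{x ∈ X} p(x))² ). -/
/-!
Write `c = |S|/|A|`. The form `∑ p x p x' · |{s : f(x,s) = f(x',s) = α}|` has diagonal
coefficients `|f(x,·)⁻¹(α)| = c` by (ACFU1) and off-diagonal coefficients at most `ε c` by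
(ACFU2). Since `p ≥ 0`, replacing every coefficient by these bounds only increases the form, and
the bounding form with constant diagonal `c` and constant off-diagonal `ε c` is
`(c - ε c) ∑ p² + ε c (∑ p)²`.
-/

open Finset

section QuadraticForm

variable {ι R : Type*} [Fintype ι] [DecidableEq ι] [CommRing R]

theorem sum_sum_mul_mul_ite_eq (p : ι → R) (a b : R) :
    ∑ i, ∑ j, p i * p j * (if i = j then a else b) =
      (a - b) * ∑ i, p i ^ 2 + b * (∑ i, p i) ^ 2 := by
  have hsplit : ∀ i j, p i * p j * (if i = j then a else b) =
      (if i = j then (a - b) * p i ^ 2 else 0) + b * (p i * p j) := by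
    intro i j
    split_ifs with h <;> [subst h; skip] <;> ring
  simp only [hsplit, sum_add_distrib, sum_ite_eq, mem_univ, if_true, ← mul_sum, sq (∑ i, p i),
    sum_mul_sum]

theorem sum_sum_mul_mul_le_of_diag_offDiag [PartialOrder R] [IsOrderedRing R]
    {M : ι → ι → R} {a b : R} (hdiag : ∀ i, M i i ≤ a) (hoff : ∀ i j, i ≠ j → M i j ≤ b)
    {p : ι → R} (hp : 0 ≤ p) :
    ∑ i, ∑ j, p i * p j * M i j ≤ (a - b) * ∑ i, p i ^ 2 + b * (∑ i, p i) ^ 2 := by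
  rw [← sum_sum_mul_mul_ite_eq]
  gcongr ∑ i, ∑ j, _ * ?_ with i _ j _
  · exact mul_nonneg (hp i) (hp j)
  · split_ifs with h
    · exact h ▸ hdiag i
    · exact hoff i j h

end QuadraticForm

section Collision

variable {X S A : Type*} [Fintype S] [DecidableEq A]

/-- The entry `(N_α N_αᵀ)_{x x'}`. -/
def collisionCount (f : X × S → A) (α : A) (x x' : X) : ℕ :=
  #{s | f (x, s) = α ∧ f (x', s) = α}

theorem collisionCount_self (f : X × S → A) (α : A) (x : X) :
    collisionCount f α x x = #{s | f (x, s) = α} := by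
  simp only [collisionCount, and_self]

end Collision

theorem acfu_bilinear_form_bound_general {X S A : Type*} [Fintype X] [Fintype S] [Fintype A]
    [DecidableEq A]
    (ε : ℝ) (f : X × S → A)
    (hACFU1 : ∀ (x : X) (α : A),
      (Fintype.card A : ℝ) * ((Finset.univ.filter fun s : S => f (x, s) = α).card : ℝ)
        = (Fintype.card S : ℝ))
    (hACFU2 : ∀ (x x' : X), x ≠ x' → ∀ (α : A),
      (Fintype.card A : ℝ) *
          ((Finset.univ.filter fun s : S => f (x, s) = α ∧ f (x', s) = α).card : ℝ)
        ≤ ε * (Fintype.card S : ℝ)) :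
    ∀ (α : A) (p : X → ℝ), (∀ x, 0 ≤ p x) →
      ∑ x : X, ∑ x' : X, p x * p x' *
          ((Finset.univ.filter fun s : S => f (x, s) = α ∧ f (x', s) = α).card : ℝ)
        ≤ (Fintype.card S : ℝ) / (Fintype.card A : ℝ) *
            ((1 - ε) * ∑ x : X, (p x) ^ 2 + ε * (∑ x : X, p x) ^ 2) := by
  intro α p hp
  classical
  have hA : (0 : ℝ) < Fintype.card A := Nat.cast_pos.2 (Fintype.card_pos_iff.2 ⟨α⟩)
  have hdiag : ∀ x, (collisionCount f α x x : ℝ) ≤ Fintype.card S / Fintype.card A := by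
    intro x
    rw [le_div_iff₀' hA, collisionCount_self]
    exact (hACFU1 x α).le
  have hoff : ∀ x x', x ≠ x' →
      (collisionCount f α x x' : ℝ) ≤ ε * (Fintype.card S / Fintype.card A) := by
    intro x x' hne
    rw [← mul_div_assoc, le_div_iff₀' hA]
    exact hACFU2 x x' hne α
  exact (sum_sum_mul_mul_le_of_diag_offDiag hdiag hoff hp).trans_eq (by ring)

/-- The key bilinear-form inequality pᵀN_αN_αᵀp ≤
(|S|/|A|)((1 − ε)pᵀp + ε(pᵀj)²) for an ε-ACFU hash function and nonnegative p. -/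
theorem acfu_bilinear_form_bound {X S A : Type*} [Fintype X] [Fintype S] [Fintype A]
    [Nonempty X] [Nonempty S] [Nonempty A] [DecidableEq A]
    (ε : ℝ) (hε : 0 ≤ ε) (f : X × S → A)
    (hACFU1 : ∀ (x : X) (α : A),
      (Fintype.card A : ℝ) * ((Finset.univ.filter fun s : S => f (x, s) = α).card : ℝ)
        = (Fintype.card S : ℝ))
    (hACFU2 : ∀ (x x' : X), x ≠ x' → ∀ (α : A),
      (Fintype.card A : ℝ) *
          ((Finset.univ.filter fun s : S => f (x, s) = α ∧ f (x', s) = α).card : ℝ)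
        ≤ ε * (Fintype.card S : ℝ)) :
    ∀ (α : A) (p : X → ℝ), (∀ x, 0 ≤ p x) →
      ∑ x : X, ∑ x' : X, p x * p x' *
          ((Finset.univ.filter fun s : S => f (x, s) = α ∧ f (x', s) = α).card : ℝ)
        ≤ (Fintype.card S : ℝ) / (Fintype.card A : ℝ) *
            ((1 - ε) * ∑ x : X, (p x) ^ 2 + ε * (∑ x : X, p x) ^ 2) :=
  acfu_bilinear_form_bound_general ε f hACFU1 hACFU2
end

section
/- Let X, Z, S, A be finite nonempty sets, ε ≥ 0 real, and let f : X × S → A be an ε-almost collision-flat universal (ε-ACFU) hash function. Let p : X × Z → ℝ be a probability distribution (p ≥ 0 and ∑_{x,z} p(x,z) = 1) with p_Z(z) := ∑_x p(x,z) > 0 for every z ∈ Z, and let H ≥ 0 be a real number such that ∑_{z ∈ Z} (∑_{x ∈ X} p(x,z)²)/p_Z(z) ≤ 2^{−H} (i.e., the conditional Rényi 2-entropy H₂(X|Z) is at least H). For each α ∈ A define q_α : Z × S → ℝ by q_α(z,s) = (|A|/|S|)·∑_{x : f(x,s) = α} p(x,z). Then: (a) for every z ∈ Z and α ∈ A, (1/|S|)·∑_{s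 ∈ S} ∑_{x : f(x,s) = α} p(x,z) = p_Z(z)/|A| (the key A = f(X,S) is uniform and independent of Z); and (b) for all α, α' ∈ A, ∑_{z ∈ Z} ∑_{s ∈ S} |q_α(z,s) − q_{α'}(z,s)| ≤ 2·√( (1 − ε)·|A|·2^{−H} + |A|·ε − 1 ). -/
/-!
Part (a) is a double count: every `x` is hashed to `α` by exactly `|S|/|A|` seeds.
For (b), compare each `q_α` with the density `u = P_Z ⊗ Uniform(S)` on `Z × S`. Cauchy–Schwarz
gives `(∑ |q_α - u|)² ≤ ∑ q_α² / u - 1`, and expanding `q_α(z, s)²` over pairs `(x, x')` turns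
`∑_s q_α(z, s)²` into a count of common seeds: `|S|/|A|` when `x = x'`, and at most
`min ε 1 · |S|/|A|` otherwise. Hence the χ²-distance is at most `|A|((1 - ε')·2^(-H) + ε') - 1`
with `ε' = min ε 1`, and the triangle inequality through `u` gives the factor `2`.
-/

open Finset

theorem sum_mul_mul_le_of_diag_eq_of_offDiag_le {ι : Type*} [Fintype ι] {w : ι → ℝ}
    (hw : ∀ i, 0 ≤ w i) {M : ι → ι → ℝ} {c δ : ℝ} (hdiag : ∀ i, M i i = c)
    (hoff : ∀ i j, i ≠ j → M i j ≤ δ * c) :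
    ∑ i, ∑ j, w i * w j * M i j ≤ c * ((1 - δ) * ∑ i, w i ^ 2 + δ * (∑ i, w i) ^ 2) := by
  classical
  calc ∑ i, ∑ j, w i * w j * M i j
      ≤ ∑ i, ∑ j, w i * w j * (δ * c + if i = j then (1 - δ) * c else 0) := by
        gcongr with i _ j _
        · exact mul_nonneg (hw i) (hw j)
        · by_cases hij : i = j
          · rw [hij, hdiag, if_pos rfl]; linarith
          · rw [if_neg hij, add_zero]; exact hoff i j hij
    _ = _ := by
        simp only [mul_add, sum_add_distrib, mul_ite, mul_zero, sum_ite_eq, mem_univ, if_true]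
        simp only [← sum_mul, ← mul_sum, sq]
        ring

theorem sq_sum_abs_sub_le_sum_sq_div_sub_one {ι : Type*} [Fintype ι] {q u : ι → ℝ}
    (hu : ∀ i, 0 < u i) (hu₁ : ∑ i, u i = 1) (hq₁ : ∑ i, q i = 1) :
    (∑ i, |q i - u i|) ^ 2 ≤ ∑ i, q i ^ 2 / u i - 1 := by
  have hexpand : ∀ i, |q i - u i| ^ 2 / u i = q i ^ 2 / u i - 2 * q i + u i := fun i => by
    have := (hu i).ne'
    rw [sq_abs]
    field_simp
    ring
  calc (∑ i, |q i - u i|) ^ 2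
      = (∑ i, |q i - u i|) ^ 2 / ∑ i, u i := by rw [hu₁, div_one]
    _ ≤ ∑ i, |q i - u i| ^ 2 / u i := sq_sum_div_le_sum_sq_div _ _ fun i _ => hu i
    _ = ∑ i, q i ^ 2 / u i - 1 := by
        simp only [hexpand, sum_add_distrib, sum_sub_distrib, ← mul_sum, hq₁, hu₁]
        ring

theorem sum_abs_sub_le_two_mul_sqrt {ι : Type*} [Fintype ι] {q q' u : ι → ℝ} {B : ℝ}
    (hu : ∀ i, 0 < u i) (hu₁ : ∑ i, u i = 1) (hq₁ : ∑ i, q i = 1) (hq'₁ : ∑ i, q' i = 1)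
    (hB : ∑ i, q i ^ 2 / u i - 1 ≤ B) (hB' : ∑ i, q' i ^ 2 / u i - 1 ≤ B) :
    ∑ i, |q i - q' i| ≤ 2 * √B := by
  have hdist : ∀ {r : ι → ℝ}, ∑ i, r i = 1 → ∑ i, r i ^ 2 / u i - 1 ≤ B →
      ∑ i, |r i - u i| ≤ √B := fun hr hrB =>
    Real.le_sqrt_of_sq_le ((sq_sum_abs_sub_le_sum_sq_div_sub_one hu hu₁ hr).trans hrB)
  calc ∑ i, |q i - q' i|
      ≤ ∑ i, (|q i - u i| + |q' i - u i|) :=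
        sum_le_sum fun i _ => by
          simpa only [Real.dist_eq] using dist_triangle_right (q i) (q' i) (u i)
    _ ≤ √B + √B := by rw [sum_add_distrib]; exact add_le_add (hdist hq₁ hB) (hdist hq'₁ hB')
    _ = 2 * √B := (two_mul _).symm

section HashMass

variable {X S A : Type*} [Fintype X] [Fintype S] [DecidableEq A]

def hashMass (f : X × S → A) (w : X → ℝ) (α : A) (s : S) : ℝ :=
  ∑ x ∈ univ.filter fun x => f (x, s) = α, w x

theorem sum_hashMass (f : X × S → A) (w : X → ℝ) (α : A) :
    ∑ s, hashMass f w α s = ∑ x, w x * #{s | f (x, s) = α} := by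
  simp only [hashMass, sum_filter]
  rw [sum_comm]
  refine sum_congr rfl fun x _ => ?_
  rw [← sum_filter, sum_const, nsmul_eq_mul, mul_comm]

theorem sum_hashMass_sq (f : X × S → A) (w : X → ℝ) (α : A) :
    ∑ s, hashMass f w α s ^ 2
      = ∑ x, ∑ x', w x * w x' * #{s | f (x, s) = α ∧ f (x', s) = α} := by
  simp only [hashMass, sum_filter, sq, sum_mul_sum, ite_zero_mul_ite_zero]
  rw [sum_comm]
  refine sum_congr rfl fun x _ => ?_
  rw [sum_comm]
  refine sum_congr rfl fun x' _ => ?_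
  rw [← sum_filter, sum_const, nsmul_eq_mul, mul_comm]

end HashMass

section Hashing

variable {X S A : Type*} [Fintype S] [Fintype A] [DecidableEq A]

/-- Condition (ACFU1). -/
def IsUniformHash (f : X × S → A) : Prop :=
  ∀ x α, (Fintype.card A : ℝ) * #{s | f (x, s) = α} = Fintype.card S

/-- Condition (ACFU2). -/
def IsCollisionFlat (ε : ℝ) (f : X × S → A) : Prop :=
  ∀ x x', x ≠ x' → ∀ α,
    (Fintype.card A : ℝ) * #{s | f (x, s) = α ∧ f (x', s) = α} ≤ ε * Fintype.card S

theorem IsCollisionFlat.min_one {f : X × S → A} {ε : ℝ} (hcoll : IsCollisionFlat ε f)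
    (hf : IsUniformHash f) : IsCollisionFlat (min ε 1) f := by
  intro x x' hx α
  rw [min_mul_of_nonneg _ _ (Nat.cast_nonneg _), one_mul]
  refine le_min (hcoll x x' hx α) ?_
  rw [← hf x α]
  gcongr
  exact And.left

variable [Fintype X] {f : X × S → A}

theorem IsUniformHash.card_mul_sum_hashMass (hf : IsUniformHash f) (w : X → ℝ) (α : A) :
    Fintype.card A * ∑ s, hashMass f w α s = Fintype.card S * ∑ x, w x := by
  simp only [sum_hashMass, mul_sum]
  refine sum_congr rfl fun x _ => ?_
  rw [mul_left_comm, hf x α, mul_comm]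

theorem IsUniformHash.one_div_card_mul_sum_hashMass [Nonempty S] (hf : IsUniformHash f)
    (w : X → ℝ) (α : A) :
    1 / (Fintype.card S : ℝ) * ∑ s, hashMass f w α s = (∑ x, w x) / Fintype.card A := by
  have : Nonempty A := ⟨α⟩
  have h := hf.card_mul_sum_hashMass w α
  field_simp
  linarith

theorem IsUniformHash.card_mul_sum_hashMass_sq_le (hf : IsUniformHash f) {δ : ℝ}
    (hcoll : IsCollisionFlat δ f) {w : X → ℝ} (hw : ∀ x, 0 ≤ w x) (α : A) :
    Fintype.card A * ∑ s, hashMass f w α s ^ 2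
      ≤ Fintype.card S * ((1 - δ) * ∑ x, w x ^ 2 + δ * (∑ x, w x) ^ 2) := by
  have hdiag : ∀ x, (Fintype.card A : ℝ) * #{s | f (x, s) = α ∧ f (x, s) = α}
      = Fintype.card S := fun x => by simpa only [and_self] using hf x α
  calc (Fintype.card A : ℝ) * ∑ s, hashMass f w α s ^ 2
      = ∑ x, ∑ x', w x * w x' *
          ((Fintype.card A : ℝ) * #{s | f (x, s) = α ∧ f (x', s) = α}) := by
        simp only [sum_hashMass_sq, mul_sum]
        exact sum_congr rfl fun x _ => sum_congr rfl fun x' _ => by ring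
    _ ≤ _ := sum_mul_mul_le_of_diag_eq_of_offDiag_le hw hdiag fun x x' hx => hcoll x x' hx α

end Hashing

section PrivacyAmplification

variable {X Z S A : Type*} [Fintype X] [Fintype S] [Fintype A] [DecidableEq A]

/-- The density `q_α(z, s)` of `P_{ZS | A = α}`, for the key `A = f(X, S)`. -/
noncomputable def keyDensity (f : X × S → A) (p : X × Z → ℝ) (α : A) (zs : Z × S) : ℝ :=
  Fintype.card A / Fintype.card S * hashMass f (fun x => p (x, zs.1)) α zs.2

noncomputable def marginalTimesUniform (p : X × Z → ℝ) (zs : Z × S) : ℝ :=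
  (∑ x, p (x, zs.1)) / Fintype.card S

variable [Nonempty S] {f : X × S → A} {p : X × Z → ℝ}

theorem marginalTimesUniform_pos (hpZ : ∀ z, 0 < ∑ x, p (x, z)) (zs : Z × S) :
    0 < marginalTimesUniform p zs :=
  div_pos (hpZ zs.1) (Nat.cast_pos.2 Fintype.card_pos)

theorem IsUniformHash.keyDensity_sq_div_le (hf : IsUniformHash f) {δ : ℝ}
    (hcoll : IsCollisionFlat δ f) (hp : ∀ xz, 0 ≤ p xz) (hpZ : ∀ z, 0 < ∑ x, p (x, z))
    (α : A) (z : Z) :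
    ∑ s, keyDensity f p α (z, s) ^ 2 / marginalTimesUniform p (z, s)
      ≤ Fintype.card A *
          ((1 - δ) * ((∑ x, p (x, z) ^ 2) / ∑ x, p (x, z)) + δ * ∑ x, p (x, z)) := by
  calc ∑ s, keyDensity f p α (z, s) ^ 2 / marginalTimesUniform p (z, s)
      = (Fintype.card A : ℝ) / (Fintype.card S * ∑ x, p (x, z)) *
          (Fintype.card A * ∑ s, hashMass f (fun x => p (x, z)) α s ^ 2) := by
        simp only [keyDensity, marginalTimesUniform, ← sum_div, mul_pow, ← mul_sum]
        field_simp
    _ ≤ (Fintype.card A : ℝ) / (Fintype.card S * ∑ x, p (x, z)) *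
          (Fintype.card S * ((1 - δ) * ∑ x, p (x, z) ^ 2 + δ * (∑ x, p (x, z)) ^ 2)) := by
        refine mul_le_mul_of_nonneg_left (hf.card_mul_sum_hashMass_sq_le hcoll (fun x => hp _) α) ?_
        exact div_nonneg (Nat.cast_nonneg _) (mul_nonneg (Nat.cast_nonneg _) (hpZ z).le)
    _ = _ := by
        field_simp

variable [Fintype Z]

theorem sum_marginalTimesUniform (hpZ₁ : ∑ z, ∑ x, p (x, z) = 1) :
    ∑ zs : Z × S, marginalTimesUniform p zs = 1 := by
  have : (Fintype.card S : ℝ) ≠ 0 := Nat.cast_ne_zero.2 Fintype.card_ne_zero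
  simp only [marginalTimesUniform, Fintype.sum_prod_type, sum_const, card_univ, nsmul_eq_mul,
    mul_div_cancel₀ _ this, hpZ₁]

theorem IsUniformHash.sum_keyDensity (hf : IsUniformHash f) (hpZ₁ : ∑ z, ∑ x, p (x, z) = 1)
    (α : A) : ∑ zs : Z × S, keyDensity f p α zs = 1 := by
  have : (0 : ℝ) < Fintype.card A := Nat.cast_pos.2 (Fintype.card_pos_iff.2 ⟨α⟩)
  rw [Fintype.sum_prod_type, ← hpZ₁]
  refine sum_congr rfl fun z _ => ?_
  have h := hf.card_mul_sum_hashMass (fun x => p (x, z)) α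
  simp only [keyDensity, ← mul_sum]
  field_simp
  linarith

theorem IsUniformHash.sum_keyDensity_sq_div_le (hf : IsUniformHash f) {δ : ℝ}
    (hcoll : IsCollisionFlat δ f) (hp : ∀ xz, 0 ≤ p xz) (hpZ : ∀ z, 0 < ∑ x, p (x, z))
    (hpZ₁ : ∑ z, ∑ x, p (x, z) = 1) (α : A) :
    ∑ zs : Z × S, keyDensity f p α zs ^ 2 / marginalTimesUniform p zs
      ≤ Fintype.card A * ((1 - δ) * ∑ z, (∑ x, p (x, z) ^ 2) / (∑ x, p (x, z)) + δ) := by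
  calc _ ≤ ∑ z, (Fintype.card A : ℝ) *
          ((1 - δ) * ((∑ x, p (x, z) ^ 2) / ∑ x, p (x, z)) + δ * ∑ x, p (x, z)) := by
        rw [Fintype.sum_prod_type]
        exact sum_le_sum fun z _ => hf.keyDensity_sq_div_le hcoll hp hpZ α z
    _ = _ := by simp only [← mul_sum, sum_add_distrib, hpZ₁, mul_one]

end PrivacyAmplification

theorem acfu_privacy_amplification_general {X Z S A : Type*}
    [Fintype X] [Fintype Z] [Fintype S] [Fintype A]
    [Nonempty S] [DecidableEq A]
    (ε : ℝ) (f : X × S → A)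
    (hACFU1 : ∀ (x : X) (α : A),
      (Fintype.card A : ℝ) * ((Finset.univ.filter fun s : S => f (x, s) = α).card : ℝ)
        = (Fintype.card S : ℝ))
    (hACFU2 : ∀ (x x' : X), x ≠ x' → ∀ (α : A),
      (Fintype.card A : ℝ) *
          ((Finset.univ.filter fun s : S => f (x, s) = α ∧ f (x', s) = α).card : ℝ)
        ≤ ε * (Fintype.card S : ℝ))
    (p : X × Z → ℝ) (hp : ∀ xz, 0 ≤ p xz) (hpsum : ∑ xz : X × Z, p xz = 1)
    (hpZ : ∀ z : Z, 0 < ∑ x : X, p (x, z))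
    (H : ℝ) (hH : 0 ≤ H)
    (hRenyi : ∑ z : Z, (∑ x : X, (p (x, z)) ^ 2) / (∑ x : X, p (x, z)) ≤ (2 : ℝ) ^ (-H))
    (q : A → Z → S → ℝ)
    (hq : ∀ (α : A) (z : Z) (s : S),
      q α z s = (Fintype.card A : ℝ) / (Fintype.card S : ℝ) *
        ∑ x ∈ Finset.univ.filter fun x : X => f (x, s) = α, p (x, z)) :
    (∀ (z : Z) (α : A),
      (1 / (Fintype.card S : ℝ)) *
          ∑ s : S, ∑ x ∈ Finset.univ.filter fun x : X => f (x, s) = α, p (x, z)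
        = (∑ x : X, p (x, z)) / (Fintype.card A : ℝ)) ∧
    (∀ α α' : A,
      ∑ z : Z, ∑ s : S, |q α z s - q α' z s|
        ≤ 2 * Real.sqrt ((1 - ε) * (Fintype.card A : ℝ) * (2 : ℝ) ^ (-H)
            + (Fintype.card A : ℝ) * ε - 1)) := by
  have hf : IsUniformHash f := hACFU1
  have hpZ₁ : ∑ z, ∑ x, p (x, z) = 1 := by rw [← hpsum, Fintype.sum_prod_type_right]
  refine ⟨fun z α => hf.one_div_card_mul_sum_hashMass _ α, fun α α' => ?_⟩
  have h2H : (2 : ℝ) ^ (-H) ≤ 1 :=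
    Real.rpow_le_one_of_one_le_of_nonpos one_le_two (neg_nonpos.2 hH)
  have hA : (0 : ℝ) ≤ Fintype.card A := Nat.cast_nonneg _
  have hχ : ∀ β, ∑ zs : Z × S, keyDensity f p β zs ^ 2 / marginalTimesUniform p zs - 1
      ≤ (1 - ε) * Fintype.card A * (2 : ℝ) ^ (-H) + Fintype.card A * ε - 1 := fun β => by
    have hδ := hf.sum_keyDensity_sq_div_le (IsCollisionFlat.min_one hACFU2 hf) hp hpZ hpZ₁ β
    -- replacing `min ε 1` by `ε` only increases the bound, as `2 ^ (-H) ≤ 1`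
    have hR := mul_le_mul_of_nonneg_left hRenyi (mul_nonneg hA (sub_nonneg.2 (min_le_right ε 1)))
    have hgap := mul_nonneg hA (mul_nonneg (sub_nonneg.2 (min_le_left ε 1)) (sub_nonneg.2 h2H))
    linear_combination hδ + hR + hgap
  have hq' : ∀ β z s, q β z s = keyDensity f p β (z, s) := hq
  simpa only [Fintype.sum_prod_type, hq'] using
    sum_abs_sub_le_two_mul_sqrt (marginalTimesUniform_pos hpZ) (sum_marginalTimesUniform hpZ₁)
      (hf.sum_keyDensity hpZ₁ α) (hf.sum_keyDensity hpZ₁ α') (hχ α) (hχ α')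

/-- Privacy amplification with an ε-ACFU hash function: the key
A = f(X,S) is uniform and independent of Z, and any two key values are nearly
indistinguishable given (Z,S), with bound 2√((1−ε)|A|2^(−H) + |A|ε − 1). -/
theorem acfu_privacy_amplification {X Z S A : Type*}
    [Fintype X] [Fintype Z] [Fintype S] [Fintype A]
    [Nonempty X] [Nonempty Z] [Nonempty S] [Nonempty A] [DecidableEq A]
    (ε : ℝ) (hε : 0 ≤ ε) (f : X × S → A)
    (hACFU1 : ∀ (x : X) (α : A),
      (Fintype.card A : ℝ) * ((Finset.univ.filter fun s : S => f (x, s) = α).card : ℝ)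
        = (Fintype.card S : ℝ))
    (hACFU2 : ∀ (x x' : X), x ≠ x' → ∀ (α : A),
      (Fintype.card A : ℝ) *
          ((Finset.univ.filter fun s : S => f (x, s) = α ∧ f (x', s) = α).card : ℝ)
        ≤ ε * (Fintype.card S : ℝ))
    (p : X × Z → ℝ) (hp : ∀ xz, 0 ≤ p xz) (hpsum : ∑ xz : X × Z, p xz = 1)
    (hpZ : ∀ z : Z, 0 < ∑ x : X, p (x, z))
    (H : ℝ) (hH : 0 ≤ H)
    (hRenyi : ∑ z : Z, (∑ x : X, (p (x, z)) ^ 2) / (∑ x : X, p (x, z)) ≤ (2 : ℝ) ^ (-H))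
    (q : A → Z → S → ℝ)
    (hq : ∀ (α : A) (z : Z) (s : S),
      q α z s = (Fintype.card A : ℝ) / (Fintype.card S : ℝ) *
        ∑ x ∈ Finset.univ.filter fun x : X => f (x, s) = α, p (x, z)) :
    (∀ (z : Z) (α : A),
      (1 / (Fintype.card S : ℝ)) *
          ∑ s : S, ∑ x ∈ Finset.univ.filter fun x : X => f (x, s) = α, p (x, z)
        = (∑ x : X, p (x, z)) / (Fintype.card A : ℝ)) ∧
    (∀ α α' : A,
      ∑ z : Z, ∑ s : S, |q α z s - q α' z s|
        ≤ 2 * Real.sqrt ((1 - ε) * (Fintype.card A : ℝ) * (2 : ℝ) ^ (-H)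
            + (Fintype.card A : ℝ) * ε - 1)) :=
  acfu_privacy_amplification_general ε f hACFU1 hACFU2 p hp hpsum hpZ H hH hRenyi q hq
end
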